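/- arXiv:1303.5998 — 10 statements merged into one kernel-verified Lean document; each statement's English description precedes it below -/
import Mathlib

section
/- Let p be a prime, S a finite p-group, and A a group of automorphisms of S of order coprime to p. Suppose A stabilizes a normal series 1 = S₀ ≤ S₁ ≤ ⋯ ≤ Sₙ = S (each Sᵢ normal in S and A-invariant) and acts trivially on each factor S_{i+1}/S_i. Then A = 1. -/
/-!
Let `a ∈ A` and `m` its order, coprime to `p`. By induction along the series, `a` fixes `Sᵢ`
pointwise: for `s ∈ S_{i+1}` the element `c = s⁻¹ a(s)` lies in `Sᵢ`, so `a(c) = c`, hence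
`aᵏ(s) = s cᵏ` for all `k`. Taking `k = m` gives `cᵐ = 1`, and a `p`-element whose `m`-th power
is trivial is trivial. So `a` fixes `Sₙ = S`, i.e. `a = 1`.
-/

theorem IsPGroup.eq_one_of_pow_eq_one {p : ℕ} {G : Type*} [Group G] (hG : IsPGroup p G)
    {m : ℕ} (hm : m.Coprime p) {g : G} (hg : g ^ m = 1) : g = 1 :=
  orderOf_eq_one_iff.mp <|
    (hG.orderOf_coprime hm.symm g).eq_one_of_dvd (orderOf_dvd_of_pow_eq_one hg)

namespace MulAut

variable {G : Type*} [Group G]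

theorem pow_apply_eq_mul_pow_of_apply_inv_mul_apply (a : MulAut G) (s : G)
    (hc : a (s⁻¹ * a s) = s⁻¹ * a s) (k : ℕ) : (a ^ k) s = s * (s⁻¹ * a s) ^ k := by
  induction k with
  | zero => simp
  | succ k ih =>
    rw [pow_succ', mul_apply, ih, map_mul, map_pow, hc, pow_succ', ← mul_assoc,
      mul_inv_cancel_left]

theorem apply_eq_self_of_apply_inv_mul_apply {p : ℕ} (hG : IsPGroup p G) (a : MulAut G)
    (ha : (orderOf a).Coprime p) (s : G) (hc : a (s⁻¹ * a s) = s⁻¹ * a s) : a s = s := by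
  have hcm : (s⁻¹ * a s) ^ orderOf a = 1 := by
    simpa [pow_orderOf_eq_one] using
      (pow_apply_eq_mul_pow_of_apply_inv_mul_apply a s hc (orderOf a)).symm
  rw [← mul_inv_cancel_left s (a s), hG.eq_one_of_pow_eq_one ha hcm, mul_one]

theorem apply_eq_self_of_mem_of_stabilizes {p : ℕ} (hG : IsPGroup p G) (a : MulAut G)
    (ha : (orderOf a).Coprime p) {n : ℕ} (ser : Fin (n + 1) → Subgroup G) (h0 : ser 0 = ⊥)
    (htriv : ∀ i : Fin n, ∀ s ∈ ser i.succ, s⁻¹ * a s ∈ ser i.castSucc) :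
    ∀ i, ∀ s ∈ ser i, a s = s := by
  refine Fin.induction ?_ (fun i ih s hs => ?_)
  · simp [h0]
  · exact apply_eq_self_of_apply_inv_mul_apply hG a ha s (ih _ (htriv i s hs))

theorem eq_one_of_stabilizes {p : ℕ} (hG : IsPGroup p G) (a : MulAut G)
    (ha : (orderOf a).Coprime p) {n : ℕ} (ser : Fin (n + 1) → Subgroup G) (h0 : ser 0 = ⊥)
    (hn : ser (Fin.last n) = ⊤)
    (htriv : ∀ i : Fin n, ∀ s ∈ ser i.succ, s⁻¹ * a s ∈ ser i.castSucc) : a = 1 :=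
  MulEquiv.ext fun s =>
    apply_eq_self_of_mem_of_stabilizes hG a ha ser h0 htriv _ s (hn ▸ Subgroup.mem_top s)

end MulAut

theorem stmt_0_general (p : ℕ) (S : Type*) [Group S]
    (hS : IsPGroup p S) (A : Subgroup (MulAut S))
    (hA : (Nat.card A).Coprime p)
    (n : ℕ) (ser : Fin (n + 1) → Subgroup S)
    (h0 : ser 0 = ⊥) (hn : ser (Fin.last n) = ⊤)
    (htriv : ∀ a : MulAut S, a ∈ A → ∀ i : Fin n, ∀ s ∈ ser i.succ,
      s⁻¹ * a s ∈ ser i.castSucc) :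
    A = ⊥ := by
  refine (Subgroup.eq_bot_iff_forall A).mpr fun a ha => ?_
  have hord : (orderOf a).Coprime p :=
    hA.coprime_dvd_left (Subgroup.orderOf_mk a ha ▸ orderOf_dvd_natCard _)
  exact MulAut.eq_one_of_stabilizes hS a hord ser h0 hn (htriv a ha)

/-- Let `p` be a prime, `S` a finite `p`-group, and `A` a group of automorphisms of `S`
of order coprime to `p`.  Suppose `A` stabilizes a normal series
`1 = S₀ ≤ S₁ ≤ ⋯ ≤ Sₙ = S` and acts trivially on each factor `S_{i+1}/S_i`.
Then `A = 1`. -/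
theorem stmt_0 (p : ℕ) (hp : p.Prime) (S : Type*) [Group S] [Finite S]
    (hS : IsPGroup p S) (A : Subgroup (MulAut S))
    (hA : (Nat.card A).Coprime p)
    (n : ℕ) (ser : Fin (n + 1) → Subgroup S)
    (h0 : ser 0 = ⊥) (hn : ser (Fin.last n) = ⊤)
    (hmono : Monotone ser)
    (hnormal : ∀ i, (ser i).Normal)
    (hinv : ∀ a : MulAut S, a ∈ A → ∀ i, (ser i).map a.toMonoidHom = ser i)
    (htriv : ∀ a : MulAut S, a ∈ A → ∀ i : Fin n, ∀ s ∈ ser i.succ,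
      s⁻¹ * a s ∈ ser i.castSucc) :
    A = ⊥ :=
  stmt_0_general p S hS A hA n ser h0 hn htriv
end

section
/- Any automorphism of a direct product of finitely many indecomposable finite groups permutes the commutator subgroups of the factors: if G = G₁ × ⋯ × Gₙ with each Gᵢ indecomposable, and φ ∈ Aut(G), then there is a permutation σ of {1,…,n} with φ([Gᵢ,Gᵢ]) = [G_{σ(i)}, G_{σ(i)}] for each i. -/
/-!
Let `M = φ(G_k)`, a normal subgroup of `G = ∏ Gᵢ` isomorphic to `G_k`. By Fitting's lemma (a
normal endomorphism of a finite indecomposable group is nilpotent or bijective), applied to the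
`k`-th component of `φ⁻¹ ∘ πᵢ ∘ φ`, `M` meets at most one factor `Gᵢ` nontrivially. For `x, y ∈ M`
the commutator `[x, yⱼ]` lies in `M ∩ Gⱼ`, so `[M, M] = φ([G_k, G_k])` is contained in `[Gᵢ, Gᵢ]`
for that `i`. The same holds for `φ⁻¹`, and as the nontrivial `[Gᵢ, Gᵢ]` are independent, these
inclusions are equalities along a permutation of the indices.
-/

open scoped commutatorElement

def IsIndecomposable (A : Type*) [Group A] : Prop :=
  ∀ H K : Subgroup A, H.Normal → K.Normal → H ⊓ K = ⊥ → H ⊔ K = ⊤ → H = ⊥ ∨ K = ⊥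

theorem exists_isIdempotentElem_pow {M : Type*} [Monoid M] [Finite M] (a : M) :
    ∃ m ≠ 0, IsIdempotentElem (a ^ m) := by
  obtain ⟨p, q, hpq, h⟩ := Finite.exists_ne_map_eq_of_infinite (fun n : ℕ => a ^ n)
  wlog hlt : p < q generalizing p q
  · exact this q p hpq.symm h.symm (hpq.lt_or_gt.resolve_left hlt)
  have hper : Function.IsPeriodicPt (· * a) (q - p) (a ^ p) := by
    simp only [Function.IsPeriodicPt, Function.IsFixedPt, mul_right_iterate, ← pow_add,
      Nat.add_sub_cancel' hlt.le]
    exact h.symm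
  -- `m` is a multiple of the period with `p < m`, so `a ^ m * a ^ m = a ^ (m - p) * a ^ p * a ^ m`
  set m := (q - p) * (p + 1)
  have hpm : p ≤ m := (Nat.le_succ p).trans (Nat.le_mul_of_pos_left _ (by omega))
  have hfix : a ^ p * a ^ m = a ^ p := by
    simpa only [Function.IsPeriodicPt, Function.IsFixedPt, mul_right_iterate] using
      hper.mul_const (p + 1)
  refine ⟨m, Nat.mul_ne_zero (by omega) (by omega), ?_⟩
  calc a ^ m * a ^ m = a ^ (m - p) * (a ^ p * a ^ m) := by
        rw [← mul_assoc, ← pow_add a (m - p), Nat.sub_add_cancel hpm]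
    _ = a ^ m := by rw [hfix, ← pow_add a (m - p), Nat.sub_add_cancel hpm]

namespace MonoidHom

variable {A : Type*} [Group A] (f : A →* A)

theorem normal_range_of_map_conj (hf : ∀ g x, f (g * x * g⁻¹) = g * f x * g⁻¹) :
    f.range.Normal where
  conj_mem := by
    rintro _ ⟨x, rfl⟩ g
    exact ⟨g * x * g⁻¹, hf g x⟩

theorem range_inf_ker_eq_bot_of_comp_self (hf : f.comp f = f) : f.range ⊓ f.ker = ⊥ := by
  refine eq_bot_iff.mpr ?_
  rintro _ ⟨⟨x, rfl⟩, hx : f x ∈ f.ker⟩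
  rwa [mem_ker, ← comp_apply, hf] at hx

theorem range_sup_ker_eq_top_of_comp_self (hf : f.comp f = f) : f.range ⊔ f.ker = ⊤ := by
  refine eq_top_iff.mpr fun x _ => ?_
  rw [← mul_inv_cancel_left (f x) x]
  refine Subgroup.mul_mem_sup ⟨x, rfl⟩ ?_
  rw [mem_ker, map_mul, map_inv, ← comp_apply, hf, inv_mul_cancel]

end MonoidHom

variable (A : Type*) [Group A] in
def normalEndomorphisms : Submonoid (Monoid.End A) where
  carrier := {f | ∀ g x, f (g * x * g⁻¹) = g * f x * g⁻¹}
  one_mem' _ _ := rfl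
  mul_mem' {f f'} hf hf' g x := by
    simp only [Set.mem_ofPred_eq, Monoid.End.coe_mul, Function.comp_apply] at *
    rw [hf', hf]

theorem mem_normalEndomorphisms {A : Type*} [Group A] {f : A →* A} :
    (f : Monoid.End A) ∈ normalEndomorphisms A ↔ ∀ g x, f (g * x * g⁻¹) = g * f x * g⁻¹ :=
  Iff.rfl

theorem IsIndecomposable.nilpotent_or_bijective {A : Type*} [Group A] [Finite A]
    (hA : IsIndecomposable A) {f : A →* A} (hf : (f : Monoid.End A) ∈ normalEndomorphisms A) :
    (∃ m, ∀ x, f^[m] x = 1) ∨ Function.Bijective f := by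
  have : Finite (Monoid.End A) := Finite.of_injective _ DFunLike.coe_injective
  obtain ⟨m, hm, hidem⟩ := exists_isIdempotentElem_pow (M := Monoid.End A) f
  rcases hA _ _ (MonoidHom.normal_range_of_map_conj _ (pow_mem (M := Monoid.End A) hf m))
    (MonoidHom.normal_ker _)
    (MonoidHom.range_inf_ker_eq_bot_of_comp_self _ hidem)
    (MonoidHom.range_sup_ker_eq_top_of_comp_self _ hidem) with hr | hk
  · exact Or.inl ⟨m, DFunLike.congr_fun (MonoidHom.range_eq_bot_iff.mp hr)⟩
  · have hinj : Function.Injective f^[m] := (MonoidHom.ker_eq_bot_iff _).mp hk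
    rw [← Nat.sub_one_add_one hm, Function.iterate_succ] at hinj
    exact Or.inr (Finite.injective_iff_bijective.mp hinj.of_comp)

section Pi

variable {ι : Type*} [DecidableEq ι] {G : ι → Type*} [∀ i, Group (G i)]

theorem mul_mulSingle_mul_inv (g : ∀ i, G i) (i : ι) (x : G i) :
    g * Pi.mulSingle i x * g⁻¹ = Pi.mulSingle i (g i * x * (g i)⁻¹) := by
  funext j
  rcases eq_or_ne j i with rfl | hj
  · simp
  · simp [Pi.mulSingle_eq_of_ne hj]

theorem normal_range_mulSingle (i : ι) : (MonoidHom.mulSingle G i).range.Normal where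
  conj_mem := by
    rintro _ ⟨x, rfl⟩ g
    exact ⟨g i * x * (g i)⁻¹, (mul_mulSingle_mul_inv g i x).symm⟩

theorem mulSingle_comp_evalMonoidHom_mem_normalEndomorphisms (i : ι) :
    ((MonoidHom.mulSingle G i).comp (Pi.evalMonoidHom G i) : Monoid.End (∀ i, G i)) ∈
      normalEndomorphisms _ :=
  mem_normalEndomorphisms.mpr fun g x => (mul_mulSingle_mul_inv g i (x i)).symm

theorem symm_comp_comp_mem_normalEndomorphisms {A : Type*} [Group A] (e : A ≃* A)
    {f : A →* A} (hf : (f : Monoid.End A) ∈ normalEndomorphisms A) :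
    (e.symm.toMonoidHom.comp (f.comp e.toMonoidHom) : Monoid.End A) ∈ normalEndomorphisms A := by
  refine mem_normalEndomorphisms.mpr fun g x => ?_
  have := mem_normalEndomorphisms.mp hf (e g) (e x)
  simp only [MonoidHom.comp_apply, MulEquiv.coe_toMonoidHom]
  rw [map_mul e, map_mul e, map_inv e, this, map_mul, map_mul, map_inv, MulEquiv.symm_apply_apply]

theorem evalMonoidHom_comp_comp_mulSingle_mem_normalEndomorphisms
    {f : (∀ i, G i) →* ∀ i, G i} (hf : (f : Monoid.End (∀ i, G i)) ∈ normalEndomorphisms _)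
    (k : ι) :
    ((Pi.evalMonoidHom G k).comp (f.comp (MonoidHom.mulSingle G k)) : Monoid.End (G k)) ∈
      normalEndomorphisms (G k) := by
  refine mem_normalEndomorphisms.mpr fun g x => ?_
  have := mem_normalEndomorphisms.mp hf (Pi.mulSingle k g) (Pi.mulSingle k x)
  simp only [MonoidHom.comp_apply, MonoidHom.mulSingle_apply, Pi.evalMonoidHom_apply] at this ⊢
  rw [mul_mulSingle_mul_inv, Pi.mulSingle_eq_same] at this
  rw [this]
  simp

theorem exists_map_mulSingle_eq_mulSingle_of_ne_bot {k i : ι} {φ : (∀ i, G i) ≃* ∀ i, G i}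
    (h : (MonoidHom.mulSingle G k).range.map φ.toMonoidHom ⊓
      (MonoidHom.mulSingle G i).range ≠ ⊥) :
    ∃ a ≠ 1, ∃ c, φ (Pi.mulSingle k a) = Pi.mulSingle i c := by
  obtain ⟨⟨_, ⟨_, ⟨a, rfl⟩, rfl⟩, c, hc⟩, hne⟩ := Subgroup.ne_bot_iff_exists_ne_one.mp h
  refine ⟨a, fun ha => hne (Subtype.ext ?_), c, hc.symm⟩
  simp [ha]

theorem eq_of_map_range_mulSingle_inf_ne_bot {k : ι} [Finite (G k)]
    (hk : IsIndecomposable (G k)) (φ : (∀ i, G i) ≃* ∀ i, G i) {i j : ι}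
    (hi : (MonoidHom.mulSingle G k).range.map φ.toMonoidHom ⊓
      (MonoidHom.mulSingle G i).range ≠ ⊥)
    (hj : (MonoidHom.mulSingle G k).range.map φ.toMonoidHom ⊓
      (MonoidHom.mulSingle G j).range ≠ ⊥) :
    i = j := by
  by_contra hij
  obtain ⟨a, ha, c, hac⟩ := exists_map_mulSingle_eq_mulSingle_of_ne_bot hi
  obtain ⟨b, hb, d, hbd⟩ := exists_map_mulSingle_eq_mulSingle_of_ne_bot hj
  -- the `k`-th component of `φ⁻¹ ∘ πᵢ ∘ φ` fixes `a` and kills `b`: neither nilpotent nor injective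
  set θ := (Pi.evalMonoidHom G k).comp ((φ.symm.toMonoidHom.comp
    (((MonoidHom.mulSingle G i).comp (Pi.evalMonoidHom G i)).comp φ.toMonoidHom)).comp
      (MonoidHom.mulSingle G k))
  have hθ : (θ : Monoid.End (G k)) ∈ normalEndomorphisms (G k) :=
    evalMonoidHom_comp_comp_mulSingle_mem_normalEndomorphisms
      (symm_comp_comp_mem_normalEndomorphisms φ
        (mulSingle_comp_evalMonoidHom_mem_normalEndomorphisms i)) k
  have hθa : θ a = a := by simp [θ, hac, φ.symm_apply_eq.mpr hac.symm]
  have hθb : θ b = 1 := by simp [θ, hbd, Pi.mulSingle_eq_of_ne hij]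
  rcases hk.nilpotent_or_bijective hθ with ⟨m, hm⟩ | hbij
  · exact ha ((Function.iterate_fixed hθa m).symm.trans (hm a))
  · exact hb (hbij.injective (by rw [hθb, map_one]))

theorem mulSingle_commutatorElement_mem {M : Subgroup (∀ i, G i)} (hM : M.Normal)
    {x : ∀ i, G i} (hx : x ∈ M) (j : ι) (c : G j) : Pi.mulSingle j ⁅x j, c⁆ ∈ M := by
  have h : Pi.mulSingle j ⁅x j, c⁆ = x * (Pi.mulSingle j c * x⁻¹ * (Pi.mulSingle j c)⁻¹) := by
    rw [← mul_assoc, ← mul_assoc, ← commutatorElement_def]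
    funext l
    rcases eq_or_ne l j with rfl | hl
    · simp [commutatorElement_def]
    · simp [commutatorElement_def, Pi.mulSingle_eq_of_ne hl]
  rw [h]
  exact M.mul_mem hx (hM.conj_mem _ (M.inv_mem hx) _)

theorem commutator_le_ker_evalMonoidHom {M : Subgroup (∀ i, G i)} (hM : M.Normal) {j : ι}
    (h : M ⊓ (MonoidHom.mulSingle G j).range = ⊥) : ⁅M, M⁆ ≤ (Pi.evalMonoidHom G j).ker := by
  refine Subgroup.commutator_le.mpr fun x hx y _ => ?_
  have hmem : Pi.mulSingle j ⁅x j, y j⁆ ∈ M ⊓ (MonoidHom.mulSingle G j).range :=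
    ⟨mulSingle_commutatorElement_mem hM hx j (y j), _, rfl⟩
  rwa [h, Subgroup.mem_bot, Pi.mulSingle_eq_one_iff] at hmem

theorem commutator_le_map_mulSingle_commutator {M : Subgroup (∀ i, G i)} (hM : M.Normal) (i : ι)
    (h : ∀ j ≠ i, M ⊓ (MonoidHom.mulSingle G j).range = ⊥) :
    ⁅M, M⁆ ≤ (commutator (G i)).map (MonoidHom.mulSingle G i) := by
  intro x hx
  have hMi : ⁅M, M⁆.map (Pi.evalMonoidHom G i) ≤ commutator (G i) := by
    rw [Subgroup.map_commutator, commutator_def]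
    exact Subgroup.commutator_mono le_top le_top
  have hxi : x i ∈ commutator (G i) := hMi ⟨x, hx, rfl⟩
  refine ⟨x i, hxi, funext fun j => ?_⟩
  rcases eq_or_ne j i with rfl | hj
  · simp
  · rw [MonoidHom.mulSingle_apply, Pi.mulSingle_eq_of_ne hj]
    exact (commutator_le_ker_evalMonoidHom hM (h j hj) hx).symm

theorem exists_map_map_mulSingle_commutator_le {k : ι} [Finite (G k)]
    (hk : IsIndecomposable (G k)) (φ : (∀ i, G i) ≃* ∀ i, G i) :
    ∃ i, ((commutator (G k)).map (MonoidHom.mulSingle G k)).map φ.toMonoidHom ≤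
      (commutator (G i)).map (MonoidHom.mulSingle G i) := by
  set M := (MonoidHom.mulSingle G k).range.map φ.toMonoidHom
  have hM : M.Normal := (normal_range_mulSingle k).map _ φ.surjective
  rw [commutator_def, Subgroup.map_commutator, Subgroup.map_commutator, ← MonoidHom.range_eq_map]
  by_cases hQ : ∃ i, M ⊓ (MonoidHom.mulSingle G i).range ≠ ⊥
  · obtain ⟨i, hi⟩ := hQ
    refine ⟨i, commutator_le_map_mulSingle_commutator hM i fun j hji => ?_⟩
    by_contra hj
    exact hji (eq_of_map_range_mulSingle_inf_ne_bot hk φ hj hi)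
  · push Not at hQ
    exact ⟨k, commutator_le_map_mulSingle_commutator hM k fun j _ => hQ j⟩

theorem eq_of_map_mulSingle_le_map_mulSingle {k l : ι} {H : Subgroup (G k)} {K : Subgroup (G l)}
    (hle : H.map (MonoidHom.mulSingle G k) ≤ K.map (MonoidHom.mulSingle G l))
    (hH : H.map (MonoidHom.mulSingle G k) ≠ ⊥) : k = l := by
  by_contra hkl
  obtain ⟨⟨_, a, ha, rfl⟩, hne⟩ := Subgroup.ne_bot_iff_exists_ne_one.mp hH
  obtain ⟨b, -, hb⟩ := hle ⟨a, ha, rfl⟩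
  have hak := congr_fun hb k
  simp only [MonoidHom.mulSingle_apply, Pi.mulSingle_eq_same, Pi.mulSingle_eq_of_ne hkl] at hak
  exact hne (by simp [← hak])

end Pi

theorem OrderIso.exists_perm_apply_eq {α ι : Type*} [PartialOrder α] [OrderBot α] [Finite ι]
    (e : α ≃o α) (D : ι → α) (hD : ∀ k l, D k ≤ D l → D k ≠ ⊥ → k = l)
    (he : ∀ k, ∃ l, e (D k) ≤ D l) (he' : ∀ k, ∃ l, e.symm (D k) ≤ D l) :
    ∃ σ : Equiv.Perm ι, ∀ k, e (D k) = D (σ k) := by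
  classical
  choose f hf using he
  choose g hg using he'
  have hfD : ∀ k, D k ≠ ⊥ → e (D k) = D (f k) := by
    intro k hk
    have hle : D k ≤ e.symm (D (f k)) := e.le_symm_apply.mpr (hf k)
    have hgf : g (f k) = k := (hD k _ (hle.trans (hg _)) hk).symm
    exact le_antisymm (hf k) (e.symm_apply_le.mp ((hg (f k)).trans_eq (congrArg D hgf)))
  have hf_ne : ∀ k, D k ≠ ⊥ → D (f k) ≠ ⊥ := fun k hk => by
    rw [← hfD k hk, Ne, ← e.map_bot, e.injective.eq_iff]
    exact hk
  -- `f` permutes the indices of the nontrivial `D k`; the others are fixed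
  set f' : {k // D k ≠ ⊥} → {k // D k ≠ ⊥} := fun k => ⟨f k, hf_ne k k.2⟩
  have hf' : Function.Injective f' := by
    intro k l hkl
    have hDkl : D k = D l := by
      rw [← e.injective.eq_iff, hfD k k.2, hfD l l.2]
      exact congrArg (D ∘ Subtype.val) hkl
    exact Subtype.ext (hD k l hDkl.le k.2)
  refine ⟨Equiv.Perm.ofSubtype (Equiv.ofBijective f' (Finite.injective_iff_bijective.mp hf')),
    fun k => ?_⟩
  by_cases hk : D k = ⊥
  · rw [Equiv.Perm.ofSubtype_apply_of_not_mem (a := k) _ (not_not.mpr hk), hk, e.map_bot]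
  · rw [Equiv.Perm.ofSubtype_apply_of_mem (a := k) _ hk]
    exact hfD k hk

/-- Any automorphism of a direct product of finitely many indecomposable finite groups
permutes the commutator subgroups of the factors. -/
theorem stmt_1 (n : ℕ) (G : Fin n → Type*) [∀ i, Group (G i)] [∀ i, Finite (G i)]
    (hind : ∀ i, ∀ H K : Subgroup (G i), H.Normal → K.Normal →
      H ⊓ K = ⊥ → H ⊔ K = ⊤ → H = ⊥ ∨ K = ⊥)
    (φ : ((i : Fin n) → G i) ≃* ((i : Fin n) → G i)) :
    ∃ σ : Equiv.Perm (Fin n), ∀ i,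
      (Subgroup.map (MonoidHom.mulSingle G i) (commutator (G i))).map φ.toMonoidHom
        = Subgroup.map (MonoidHom.mulSingle G (σ i)) (commutator (G (σ i))) :=
  (MulEquiv.mapSubgroup φ).exists_perm_apply_eq
    (fun i => (commutator (G i)).map (MonoidHom.mulSingle G i))
    (fun _ _ => eq_of_map_mulSingle_le_map_mulSingle)
    (fun k => exists_map_map_mulSingle_commutator_le (hind k) φ)
    (fun k => exists_map_map_mulSingle_commutator_le (hind k) φ.symm)
end

section
/- Let D be a dihedral group of order 2^{k+1} with k ≥ 2. Then the outer automorphism group Out(D) is isomorphic to C₂ × C_{2^{k-2}}. -/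
/-!
Every automorphism of `D = DihedralGroup n` (`n ≥ 3`) is affine: `r i ↦ r (a * i)`,
`sr i ↦ sr (b + a * i)` for a unique unit `a` and `b : ZMod n`, and these compose like the
affine group of `ZMod n`. Conjugation by `r j` is `(1, -2j)` and by `sr j` is `(-1, 2j)`, so the
inner automorphisms are exactly the pairs with `a = ±1` and `b` even. For even `n`, the map
`(a, b) ↦ (b mod 2, ±a)` is therefore a surjective homomorphism onto `C₂ × (ZMod n)ˣ/{±1}` with
kernel `Inn D`. For `n = 2 ^ (m + 2)` the quotient `(ZMod n)ˣ/{±1}` has order `2 ^ m` and is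
generated by the image of `5`, which has order `2 ^ m` in `(ZMod n)ˣ` and no power of which is
`-1` (as `5 ≡ 1 mod 4`).
-/

lemma Units.mem_zpowers_neg_one_iff {M : Type*} [Monoid M] [HasDistribNeg M] {u : Mˣ} :
    u ∈ Subgroup.zpowers (-1) ↔ u = 1 ∨ u = -1 := by
  refine ⟨?_, by rintro (rfl | rfl) <;> simp [Subgroup.mem_zpowers]⟩
  rintro ⟨z, rfl⟩
  rcases Int.even_or_odd' z with ⟨k, rfl | rfl⟩ <;> simp [zpow_add, zpow_mul]

namespace ZMod

lemma five_pow_ne_neg_one (n t : ℕ) : (5 : ZMod (2 ^ (n + 2))) ^ t ≠ -1 := by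
  intro h
  have h4 : 4 ∣ 2 ^ (n + 2) := ⟨2 ^ n, by ring⟩
  have := congrArg (castHom h4 (ZMod 4)) h
  rw [map_pow, map_neg, map_one, map_ofNat] at this
  revert this
  rw [show (5 : ZMod 4) = 1 from rfl, one_pow]
  decide

lemma orderOf_neg_one_units_two_pow (n : ℕ) : orderOf (-1 : (ZMod (2 ^ (n + 2)))ˣ) = 2 := by
  refine orderOf_eq_prime (by simp) fun h => five_pow_ne_neg_one n 0 ?_
  simpa using (congrArg Units.val h).symm

lemma card_units_two_pow_quotient_zpowers_neg_one (n : ℕ) :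
    Nat.card ((ZMod (2 ^ (n + 2)))ˣ ⧸ Subgroup.zpowers (-1)) = 2 ^ n := by
  have hcard :=
    (Subgroup.zpowers (-1 : (ZMod (2 ^ (n + 2)))ˣ)).card_eq_card_quotient_mul_card_subgroup
  rw [Nat.card_zpowers, orderOf_neg_one_units_two_pow, Nat.card_eq_fintype_card,
    card_units_eq_totient, Nat.totient_prime_pow_succ Nat.prime_two] at hcard
  simp only [pow_succ] at hcard
  omega

lemma isCyclic_units_two_pow_quotient_zpowers_neg_one (n : ℕ) :
    IsCyclic ((ZMod (2 ^ (n + 2)))ˣ ⧸ Subgroup.zpowers (-1)) := by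
  have h5 : IsUnit (5 : ZMod (2 ^ (n + 2))) := by
    have := (isUnit_iff_coprime 5 (2 ^ (n + 2))).mpr (Nat.Coprime.pow_right _ (by decide))
    exact_mod_cast this
  set g : (ZMod (2 ^ (n + 2)))ˣ ⧸ Subgroup.zpowers (-1) := QuotientGroup.mk h5.unit
  have hord5 : orderOf h5.unit = 2 ^ n := by
    rw [← orderOf_units, IsUnit.unit_spec, orderOf_five]
  refine isCyclic_of_orderOf_eq_card g ?_
  rw [card_units_two_pow_quotient_zpowers_neg_one, ← hord5]
  refine Nat.dvd_antisymm (orderOf_map_dvd (QuotientGroup.mk' _) _) (orderOf_dvd_of_pow_eq_one ?_)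
  have hmem : h5.unit ^ orderOf g ∈ Subgroup.zpowers (-1) := by
    rw [← QuotientGroup.eq_one_iff, QuotientGroup.mk_pow, pow_orderOf_eq_one]
  refine (Units.mem_zpowers_neg_one_iff.mp hmem).resolve_right fun h => ?_
  exact five_pow_ne_neg_one n _ (by simpa using congrArg Units.val h)

noncomputable def unitsTwoPowQuotientZPowersNegOneEquiv (n : ℕ) :
    (ZMod (2 ^ (n + 2)))ˣ ⧸ Subgroup.zpowers (-1) ≃* Multiplicative (ZMod (2 ^ n)) :=
  have := isCyclic_units_two_pow_quotient_zpowers_neg_one n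
  mulEquivOfCyclicCardEq <| by
    rw [card_units_two_pow_quotient_zpowers_neg_one]
    simp [Nat.card_eq_fintype_card]

lemma castHom_two_eq_zero_iff_even {n : ℕ} (h2 : 2 ∣ n) (b : ZMod n) :
    castHom h2 (ZMod 2) b = 0 ↔ Even b := by
  constructor
  · intro h
    rw [← intCast_zmod_cast b, map_intCast, intCast_eq_zero_iff_even] at h
    rw [← intCast_zmod_cast b]
    exact h.intCast
  · rintro ⟨c, rfl⟩
    rw [map_add, CharTwo.add_self_eq_zero]

lemma castHom_two_units_eq_one {n : ℕ} (h2 : 2 ∣ n) (u : (ZMod n)ˣ) :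
    castHom h2 (ZMod 2) u = 1 := by
  obtain ⟨v, hv⟩ := u.isUnit.map (castHom h2 (ZMod 2))
  rw [← hv, Subsingleton.elim v 1, Units.val_one]

end ZMod

namespace DihedralGroup

variable {n : ℕ}

def affineAut (a : (ZMod n)ˣ) (b : ZMod n) : MulAut (DihedralGroup n) where
  toFun
    | r i => r (a * i)
    | sr i => sr (b + a * i)
  invFun
    | r i => r (↑a⁻¹ * i)
    | sr i => sr (↑a⁻¹ * (i - b))
  left_inv x := by cases x <;> simp
  right_inv x := by cases x <;> simp
  map_mul' x y := by
    cases x <;> cases y <;> simp only [r_mul_r, r_mul_sr, sr_mul_r, sr_mul_sr] <;> (congr 1; ring)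

@[simp]
lemma affineAut_r (a : (ZMod n)ˣ) (b i : ZMod n) :
    affineAut a b (r i) = r ((a : ZMod n) * i) :=
  rfl

@[simp]
lemma affineAut_sr (a : (ZMod n)ˣ) (b i : ZMod n) :
    affineAut a b (sr i) = sr (b + (a : ZMod n) * i) :=
  rfl

lemma affineAut_mul (a a' : (ZMod n)ˣ) (b b' : ZMod n) :
    affineAut a b * affineAut a' b' = affineAut (a * a') (b + (a : ZMod n) * b') := by
  ext x
  cases x <;> simp only [MulAut.mul_apply, affineAut_r, affineAut_sr, Units.val_mul] <;>
    (congr 1; ring)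

lemma affineAut_inj {a a' : (ZMod n)ˣ} {b b' : ZMod n} :
    affineAut a b = affineAut a' b' ↔ a = a' ∧ b = b' := by
  refine ⟨fun h => ⟨Units.ext ?_, ?_⟩, by rintro ⟨rfl, rfl⟩; rfl⟩
  · simpa using DFunLike.congr_fun h (r 1)
  · simpa using DFunLike.congr_fun h (sr 0)

lemma conj_r (j : ZMod n) : MulAut.conj (r j) = affineAut 1 (-(2 * j)) := by
  ext x
  cases x <;>
    simp only [MulAut.conj_apply, inv_r, r_mul_r, r_mul_sr, sr_mul_r, affineAut_r, affineAut_sr,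
      Units.val_one] <;>
    (congr 1; ring)

lemma conj_sr (j : ZMod n) : MulAut.conj (sr j) = affineAut (-1) (2 * j) := by
  ext x
  cases x <;>
    simp only [MulAut.conj_apply, inv_sr, sr_mul_r, sr_mul_sr, r_mul_sr, affineAut_r,
      affineAut_sr, Units.val_neg, Units.val_one] <;>
    (congr 1; ring)

lemma affineAut_mem_range_conj {a : (ZMod n)ˣ} {b : ZMod n} :
    affineAut a b ∈ (MulAut.conj : DihedralGroup n →* _).range ↔
      (a = 1 ∨ a = -1) ∧ Even b := by
  constructor
  · rintro ⟨j | j, h⟩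
    · obtain ⟨rfl, rfl⟩ := affineAut_inj.mp ((conj_r j).symm.trans h)
      exact ⟨.inl rfl, (even_two_mul j).neg⟩
    · obtain ⟨rfl, rfl⟩ := affineAut_inj.mp ((conj_sr j).symm.trans h)
      exact ⟨.inr rfl, even_two_mul j⟩
  · rintro ⟨rfl | rfl, c, rfl⟩
    · exact ⟨r (-c), by rw [conj_r]; congr 1; ring⟩
    · exact ⟨sr c, by rw [conj_sr, two_mul]⟩

lemma apply_r_of_apply_r_one {f : MulAut (DihedralGroup n)} {a : ZMod n} (h : f (r 1) = r a)
    (i : ZMod n) : f (r i) = r (a * i) := by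
  rw [← ZMod.intCast_zmod_cast i, ← r_one_zpow, map_zpow, h, r_zpow]

lemma exists_apply_r_one_eq_r (hn : 3 ≤ n) (f : MulAut (DihedralGroup n)) :
    ∃ a, f (r 1) = r a := by
  rcases hf : f (r 1) with a | j
  · exact ⟨a, rfl⟩
  · have := f.orderOf_eq (r 1)
    rw [hf, orderOf_sr, orderOf_r_one] at this
    omega

lemma exists_apply_sr_zero_eq_sr (hn : 3 ≤ n) (f : MulAut (DihedralGroup n)) :
    ∃ b, f (sr 0) = sr b := by
  rcases hf : f (sr 0) with j | b
  · exfalso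
    obtain ⟨a, ha⟩ := exists_apply_r_one_eq_r hn f
    -- `f (sr 0)` commutes with the rotation `f (r 1)`, but `sr 0` does not commute with `r 1`.
    have hcomm : r 1 * sr 0 = sr 0 * (r 1 : DihedralGroup n) :=
      f.injective (by rw [map_mul, map_mul, ha, hf, r_mul_r, r_mul_r, add_comm])
    rw [r_mul_sr, sr_mul_r, sr.injEq] at hcomm
    have h2 : ((2 : ℕ) : ZMod n) = 0 := by push_cast; linear_combination -hcomm
    have := Nat.le_of_dvd two_pos ((ZMod.natCast_eq_zero_iff 2 n).mp h2)
    omega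
  · exact ⟨b, rfl⟩

lemma exists_affineAut_eq (hn : 3 ≤ n) (f : MulAut (DihedralGroup n)) :
    ∃ a b, affineAut a b = f := by
  obtain ⟨a, ha⟩ := exists_apply_r_one_eq_r hn f
  obtain ⟨a', ha'⟩ := exists_apply_r_one_eq_r hn f.symm
  obtain ⟨b, hb⟩ := exists_apply_sr_zero_eq_sr hn f
  have haa' : a * a' = 1 := by
    have := f.apply_symm_apply (r 1)
    rwa [ha', apply_r_of_apply_r_one ha, r.injEq] at this
  refine ⟨Units.mkOfMulEqOne a a' haa', b, ?_⟩
  ext (i | i)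
  · simp [apply_r_of_apply_r_one ha]
  · rw [← zero_add i, ← sr_mul_r, map_mul, map_mul, hb, apply_r_of_apply_r_one ha]
    simp

noncomputable def affineAutEquiv (hn : 3 ≤ n) :
    (ZMod n)ˣ × ZMod n ≃ MulAut (DihedralGroup n) :=
  Equiv.ofBijective (fun p => affineAut p.1 p.2)
    ⟨fun _ _ h => Prod.ext_iff.mpr (affineAut_inj.mp h), fun f => by
      obtain ⟨a, b, h⟩ := exists_affineAut_eq hn f
      exact ⟨(a, b), h⟩⟩

section Outer

variable (hn : 3 ≤ n) (h2 : 2 ∣ n)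

noncomputable def outerHom :
    MulAut (DihedralGroup n) →* Multiplicative (ZMod 2) × ((ZMod n)ˣ ⧸ Subgroup.zpowers (-1)) :=
  MonoidHom.mk'
    (fun f => let p := (affineAutEquiv hn).symm f
      (Multiplicative.ofAdd (ZMod.castHom h2 (ZMod 2) p.2),
        (p.1 : (ZMod n)ˣ ⧸ Subgroup.zpowers (-1))))
    (by
      intro f g
      obtain ⟨⟨a, b⟩, rfl⟩ := (affineAutEquiv hn).surjective f
      obtain ⟨⟨a', b'⟩, rfl⟩ := (affineAutEquiv hn).surjective g
      have hmul : affineAutEquiv hn (a, b) * affineAutEquiv hn (a', b') =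
          affineAutEquiv hn (a * a', b + a * b') := affineAut_mul a a' b b'
      simp only [hmul, Equiv.symm_apply_apply, map_add, map_mul, ZMod.castHom_two_units_eq_one,
        one_mul, ofAdd_add, QuotientGroup.mk_mul, Prod.mk_mul_mk])

lemma outerHom_affineAut (a : (ZMod n)ˣ) (b : ZMod n) :
    outerHom hn h2 (affineAut a b) =
      (Multiplicative.ofAdd (ZMod.castHom h2 (ZMod 2) b),
        (a : (ZMod n)ˣ ⧸ Subgroup.zpowers (-1))) := by
  change outerHom hn h2 (affineAutEquiv hn (a, b)) = _
  simp [outerHom]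

lemma outerHom_surjective : Function.Surjective (outerHom hn h2) := by
  rintro ⟨x, q⟩
  obtain ⟨a, rfl⟩ := QuotientGroup.mk_surjective q
  obtain ⟨b, hb⟩ := ZMod.ringHom_surjective (ZMod.castHom h2 (ZMod 2)) x.toAdd
  exact ⟨affineAut a b, by rw [outerHom_affineAut, hb]; rfl⟩

lemma ker_outerHom :
    (outerHom hn h2).ker = (MulAut.conj : DihedralGroup n →* _).range := by
  ext f
  obtain ⟨a, b, rfl⟩ := exists_affineAut_eq hn f
  rw [MonoidHom.mem_ker, outerHom_affineAut, affineAut_mem_range_conj, Prod.mk_eq_one,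
    ofAdd_eq_one, ZMod.castHom_two_eq_zero_iff_even, QuotientGroup.eq_one_iff,
    Units.mem_zpowers_neg_one_iff, and_comm]

end Outer

end DihedralGroup

/-- Let `D` be a dihedral group of order `2^(k+1)` with `k ≥ 2`.  Then the outer
automorphism group `Out(D) = Aut(D)/Inn(D)` is isomorphic to `C₂ × C_{2^(k-2)}`.
(Formulated via the first isomorphism theorem: there is a surjective homomorphism
from `Aut(D)` onto `C₂ × C_{2^(k-2)}` whose kernel is the group of inner
automorphisms.) -/
theorem stmt_2 (k : ℕ) (hk : 2 ≤ k) :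
    ∃ φ : MulAut (DihedralGroup (2 ^ k)) →*
        Multiplicative (ZMod 2) × Multiplicative (ZMod (2 ^ (k - 2))),
      Function.Surjective φ ∧
        φ.ker = (MulAut.conj : DihedralGroup (2 ^ k) →* MulAut (DihedralGroup (2 ^ k))).range := by
  obtain ⟨m, rfl⟩ : ∃ m, k = m + 2 := ⟨k - 2, by omega⟩
  rw [Nat.add_sub_cancel]
  have hn : 3 ≤ 2 ^ (m + 2) :=
    le_trans (by norm_num : 3 ≤ 2 ^ 2) (Nat.pow_le_pow_right two_pos (Nat.le_add_left 2 m))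
  have h2 : 2 ∣ 2 ^ (m + 2) := dvd_pow_self 2 (by omega)
  let e := (MulEquiv.refl (Multiplicative (ZMod 2))).prodCongr
    (ZMod.unitsTwoPowQuotientZPowersNegOneEquiv m)
  refine ⟨(e : _ →* _).comp (DihedralGroup.outerHom hn h2), ?_, ?_⟩
  · exact e.surjective.comp (DihedralGroup.outerHom_surjective hn h2)
  · exact (MonoidHom.ker_mulEquiv_comp _ e).trans (DihedralGroup.ker_outerHom hn h2)
end

section
/- Let D be a dihedral group of order 2^{k+1} (k ≥ 2) with cyclic maximal subgroup C, and let S be a finite 2-group containing D as a normal subgroup. Let S₀ be the set of elements s ∈ S with s² ∈ C_S(D)·D. Then every element of S₀ squares into C_S(D)·C, i.e. s² ∈ C_S(D)C for all s ∈ S₀. -/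
/-!
Write `s ^ 2 = z * d` with `z` centralizing `D` and `d ∈ D`, and `C = ⟨g⟩`. Inside `D ≅ D_{2^(k+1)}`
the elements of order `> 2` are rotations, and the rotations form exactly `C` because `C` is cyclic
of order `2 ^ k`. Conjugation by `s` preserves `D` and orders, so `s⁻¹ g s = g ^ m`. If `d ∉ C`,
then `d` is a reflection and inverts `g`; as `z` commutes with `g`, conjugation by `s ^ 2` inverts
`g`, while it also sends `g` to `g ^ (m ^ 2)`. Hence `2 ^ k ∣ m ^ 2 + 1`, which is impossible
modulo `4` since `k ≥ 2`.
-/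

open Subgroup

namespace DihedralGroup

variable {n : ℕ}

def rotations (n : ℕ) : Subgroup (DihedralGroup n) := zpowers (r 1)

@[simp]
lemma r_mem_rotations (i : ZMod n) : r i ∈ rotations n :=
  ⟨(i.cast : ℤ), by simp only [r_one_zpow, ZMod.intCast_zmod_cast]⟩

@[simp]
lemma sr_notMem_rotations (i : ZMod n) : sr i ∉ rotations n := by
  rintro ⟨k, hk⟩
  simp only [r_one_zpow] at hk
  cases hk

lemma nat_card_rotations : Nat.card (rotations n) = n := by
  rw [rotations, Nat.card_zpowers, orderOf_r_one]

lemma mem_rotations_of_two_lt_orderOf {x : DihedralGroup n} (h : 2 < orderOf x) :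
    x ∈ rotations n := by
  cases x with
  | r i => exact r_mem_rotations i
  | sr i => exact absurd h (by simp [orderOf_sr])

lemma zpowers_eq_rotations (hn : 2 < n) {x : DihedralGroup n} (hx : orderOf x = n) :
    zpowers x = rotations n := by
  have : NeZero n := ⟨by omega⟩
  refine eq_of_le_of_card_ge (zpowers_le.mpr (mem_rotations_of_two_lt_orderOf (by rwa [hx]))) ?_
  rw [nat_card_rotations, Nat.card_zpowers, hx]

lemma inv_mul_mul_eq_inv {x y : DihedralGroup n} (hx : x ∈ rotations n) (hy : y ∉ rotations n) :
    y⁻¹ * x * y = x⁻¹ := by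
  cases x with
  | sr i => exact absurd hx (sr_notMem_rotations i)
  | r i =>
    cases y with
    | r j => exact absurd (r_mem_rotations j) hy
    | sr j => simp only [inv_sr, inv_r, sr_mul_r, sr_mul_sr, sub_add_cancel_left]

end DihedralGroup

section DihedralSubgroup

variable {S : Type*} [Group S] {D : Subgroup S} {n : ℕ} (e : D ≃* DihedralGroup n)
  (hn : 2 < n) {g : S} (hgD : g ∈ D) (hg : orderOf g = n)
include e hn hgD hg

lemma mem_zpowers_iff_mem_rotations (x : D) :
    (x : S) ∈ zpowers g ↔ e x ∈ DihedralGroup.rotations n := by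
  have hmap : (zpowers (⟨g, hgD⟩ : D)).map e.toMonoidHom = DihedralGroup.rotations n := by
    rw [MonoidHom.map_zpowers]
    exact DihedralGroup.zpowers_eq_rotations hn (by simp [MulEquiv.orderOf_eq, hg])
  rw [← hmap, mem_map_equiv, MulEquiv.symm_apply_apply, ← mem_map_iff_mem D.subtype_injective,
    MonoidHom.map_zpowers]
  rfl

lemma mem_zpowers_of_two_lt_orderOf {x : S} (hx : x ∈ D) (h : 2 < orderOf x) :
    x ∈ zpowers g :=
  (mem_zpowers_iff_mem_rotations e hn hgD hg ⟨x, hx⟩).mpr <|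
    DihedralGroup.mem_rotations_of_two_lt_orderOf (by simpa [MulEquiv.orderOf_eq] using h)

lemma inv_mul_mul_eq_inv_of_notMem_zpowers {y : S} (hy : y ∈ D) (hyg : y ∉ zpowers g) :
    y⁻¹ * g * y = g⁻¹ := by
  have hrot := mem_zpowers_iff_mem_rotations e hn hgD hg
  have := DihedralGroup.inv_mul_mul_eq_inv ((hrot ⟨g, hgD⟩).mp (mem_zpowers g))
    (fun h => hyg ((hrot ⟨y, hy⟩).mpr h))
  simpa [← map_inv, ← map_mul, e.injective.eq_iff, Subtype.ext_iff] using this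

end DihedralSubgroup

lemma Int.not_four_dvd_sq_add_one (m : ℤ) : ¬ 4 ∣ m ^ 2 + 1 := by
  intro h
  have h4 := (ZMod.intCast_zmod_eq_zero_iff_dvd _ 4).mpr h
  push_cast at h4
  generalize (m : ZMod 4) = a at h4
  revert a
  decide

lemma orderOf_dvd_sq_add_one {G : Type*} [Group G] {g s : G} {m : ℤ}
    (hm : g ^ m = s⁻¹ * g * s) (hsq : (s ^ 2)⁻¹ * g * s ^ 2 = g⁻¹) :
    (orderOf g : ℤ) ∣ m ^ 2 + 1 := by
  have hconj : ∀ j : ℤ, s⁻¹ * g ^ j * s = g ^ (m * j) := fun j => by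
    have := conj_zpow (i := j) (a := s⁻¹) (b := g)
    rw [inv_inv] at this
    rw [zpow_mul, hm, this]
  have hpow : g ^ (m ^ 2) = g⁻¹ :=
    calc g ^ (m ^ 2) = s⁻¹ * g ^ m * s := by rw [hconj, sq]
      _ = (s ^ 2)⁻¹ * g * s ^ 2 := by rw [hm, sq, mul_inv_rev]; group
      _ = g⁻¹ := hsq
  exact orderOf_dvd_iff_zpow_eq_one.mpr (by rw [zpow_add, hpow, zpow_one, inv_mul_cancel])

theorem stmt_4_general (k : ℕ) (hk : 2 ≤ k) (S : Type*) [Group S]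
    (D : Subgroup S) (hDn : D.Normal)
    (hD : Nonempty (D ≃* DihedralGroup (2 ^ k)))
    (C : Subgroup S) (hCD : C ≤ D) (hCcyc : IsCyclic C) (hCcard : Nat.card C = 2 ^ k)
    (s : S) (hs : s ^ 2 ∈ Subgroup.centralizer (D : Set S) ⊔ D) :
    s ^ 2 ∈ Subgroup.centralizer (D : Set S) ⊔ C := by
  obtain ⟨e⟩ := hD
  obtain ⟨g, rfl⟩ := C.isCyclic_iff_exists_zpowers_eq_top.mp hCcyc
  rw [Nat.card_zpowers] at hCcard
  have hgD : g ∈ D := zpowers_le.mp hCD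
  have hn : 2 < 2 ^ k := lt_of_lt_of_le (by norm_num) (Nat.pow_le_pow_right two_pos hk)
  obtain ⟨z, hz, d, hd, hzd⟩ := mem_sup_of_normal_left.mp hs
  by_cases hdg : d ∈ zpowers g
  · exact hzd ▸ mul_mem_sup hz hdg
  exfalso
  have hgs : s⁻¹ * g * s ∈ zpowers g := by
    refine mem_zpowers_of_two_lt_orderOf e hn hgD hCcard ?_ ?_
    · simpa using hDn.conj_mem g hgD s⁻¹
    · rwa [SemiconjBy.orderOf_eq s (y := g) (by rw [SemiconjBy]; group), hCcard]
  obtain ⟨m, hm⟩ := mem_zpowers_iff.mp hgs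
  have hsq : (s ^ 2)⁻¹ * g * s ^ 2 = g⁻¹ := by
    have hzg : g * z = z * g := mem_centralizer_iff.mp hz g hgD
    calc (s ^ 2)⁻¹ * g * s ^ 2 = d⁻¹ * (z⁻¹ * (g * z)) * d := by rw [← hzd]; group
      _ = g⁻¹ := by
        rw [hzg, inv_mul_cancel_left, inv_mul_mul_eq_inv_of_notMem_zpowers e hn hgD hCcard hd hdg]
  have h4 := (Int.natCast_dvd_natCast.mpr (pow_dvd_pow 2 hk)).trans
    (hCcard ▸ orderOf_dvd_sq_add_one hm hsq)
  exact Int.not_four_dvd_sq_add_one m (by simpa using h4)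

/-- Let `D` be a dihedral group of order `2^(k+1)` (`k ≥ 2`) with cyclic maximal
subgroup `C`, and `S` a finite `2`-group containing `D` as a normal subgroup.
Every element of `S` squaring into `C_S(D)·D` in fact squares into `C_S(D)·C`. -/
theorem stmt_4 (k : ℕ) (hk : 2 ≤ k) (S : Type*) [Group S] [Finite S]
    (hS : IsPGroup 2 S) (D : Subgroup S) (hDn : D.Normal)
    (hD : Nonempty (D ≃* DihedralGroup (2 ^ k)))
    (C : Subgroup S) (hCD : C ≤ D) (hCcyc : IsCyclic C) (hCcard : Nat.card C = 2 ^ k)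
    (s : S) (hs : s ^ 2 ∈ Subgroup.centralizer (D : Set S) ⊔ D) :
    s ^ 2 ∈ Subgroup.centralizer (D : Set S) ⊔ C :=
  stmt_4_general k hk S D hDn hD C hCD hCcyc hCcard s hs
end

section
/- Let S be a finite 2-group that is nonabelian of maximal class (i.e. dihedral, semidihedral, or generalized quaternion of order 2^k, k ≥ 3). If P is a subgroup of S whose automorphism group Aut(P) is not a 2-group, then P is isomorphic to C₂ × C₂ or to Q₈. -/
/-!
Each group in the three families has a cyclic subgroup `R` of index 2 with `x ^ 4 = 1` for all
`x ∉ R`, so `C = P ∩ R` is cyclic of index at most 2 in `P`; as `Aut P` is a 2-group for cyclic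
`P`, we may assume `C = ⟨d⟩` has index 2. An automorphism stabilising `C` restricts to an
automorphism of the cyclic 2-group `C`, so a 2-power of it fixes `C` pointwise; an automorphism
fixing `C` pointwise sends each `g` to `g c` with `c ∈ C` fixed, so its `|C|`-th power is
trivial. Hence `Aut P` is a 2-group as soon as a 2-power of every automorphism stabilises `C`,
which holds when no element outside `C` has the order of `d`, in particular when `|d| ≥ 8`.
Otherwise `|d| ≤ 4`: either `|P| = 4` and `P ≅ C₂ × C₂`, or `|P| = 8` and an element `x ∉ C` of
order 4 either inverts `d`, giving `Q₈`, or centralises it, giving `C₄ × C₂`, where squares of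
automorphisms stabilise `C`.
-/

/-- `G` is semidihedral of order `2^n`. -/
def IsSemidihedral (G : Type*) [Group G] (n : ℕ) : Prop :=
  ∃ r s : G, orderOf r = 2 ^ (n - 1) ∧ orderOf s = 2 ∧
    s * r * s⁻¹ = r ^ (2 ^ (n - 2) - 1) ∧ Subgroup.closure {r, s} = ⊤ ∧
    Nat.card G = 2 ^ n

open Subgroup

section Automorphisms

variable {G : Type*} [Group G]

theorem IsPGroup.mulAut_of_isCyclic [Finite G] [IsCyclic G] (hG : IsPGroup 2 G) :
    IsPGroup 2 (MulAut G) := by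
  have := Fact.mk Nat.prime_two
  obtain ⟨t, ht⟩ := IsPGroup.iff_card.mp hG
  refine IsPGroup.of_card (n := t - 1) ?_
  rw [IsCyclic.card_mulAut, ht]
  cases t with
  | zero => simp
  | succ t => simp [Nat.totient_prime_pow_succ Nat.prime_two]

theorem MulAut.pow_card_eq_one_of_index_eq_two {H : Subgroup G} (hH : H.index = 2)
    {φ : MulAut G} (hφ : ∀ h ∈ H, φ h = h) : φ ^ Nat.card H = 1 := by
  ext g
  have hφg : φ g ∈ H ↔ g ∈ H :=
    ⟨fun h => φ.injective (hφ _ h) ▸ h, fun h => (hφ g h).symm ▸ h⟩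
  set c := g⁻¹ * φ g
  have hc : c ∈ H := by rw [mul_mem_iff_of_index_two hH, inv_mem_iff, hφg]
  have hpow : ∀ n : ℕ, (φ ^ n) g = g * c ^ n := by
    intro n
    induction n with
    | zero => simp
    | succ n ih =>
      rw [pow_succ', MulAut.mul_apply, ih, map_mul, map_pow, hφ c hc, pow_succ', ← mul_assoc,
        mul_inv_cancel_left]
  rw [hpow, MulAut.one_apply, mul_eq_left]
  exact congrArg Subtype.val (pow_card_eq_one' (G := H) (x := ⟨c, hc⟩))

theorem IsPGroup.mulAut_of_isCyclic_of_index_eq_two [Finite G] (hG : IsPGroup 2 G)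
    {H : Subgroup G} [IsCyclic H] (hH : H.index = 2)
    (hstab : ∀ φ : MulAut G, ∃ n : ℕ, H.map (φ ^ 2 ^ n).toMonoidHom ≤ H) :
    IsPGroup 2 (MulAut G) := by
  have := Fact.mk Nat.prime_two
  intro φ
  obtain ⟨n, hn⟩ := hstab φ
  set ψ := φ ^ 2 ^ n
  have hmap : H.map ψ.toMonoidHom = H :=
    eq_of_le_of_card_ge hn (card_map_of_injective ψ.injective).ge
  let ρ : MulAut H := (ψ.subgroupMap H).trans (MulEquiv.subgroupCongr hmap)
  have hρ : ∀ (m : ℕ) (h : H), ((ρ ^ m) h : G) = (ψ ^ m) h := by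
    intro m h
    induction m with
    | zero => rfl
    | succ m ih => rw [pow_succ', pow_succ', MulAut.mul_apply, MulAut.mul_apply, ← ih]; rfl
  have hH2 : IsPGroup 2 H := hG.to_subgroup H
  obtain ⟨m, hm⟩ := hH2.mulAut_of_isCyclic ρ
  obtain ⟨t, ht⟩ := IsPGroup.iff_card.mp hH2
  have hfix : ∀ h ∈ H, (ψ ^ 2 ^ m) h = h := fun h hh => by
    rw [← hρ (2 ^ m) ⟨h, hh⟩, hm, MulAut.one_apply]
  refine ⟨n + m + t, ?_⟩
  rw [pow_add, pow_add, pow_mul, pow_mul, ← ht]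
  exact MulAut.pow_card_eq_one_of_index_eq_two hH hfix

theorem map_zpowers_le_of_forall_orderOf_ne {d : G}
    (hd : ∀ x ∉ zpowers d, orderOf x ≠ orderOf d) (φ : MulAut G) :
    (zpowers d).map φ.toMonoidHom ≤ zpowers d := by
  rw [MonoidHom.map_zpowers, zpowers_le]
  by_contra h
  exact hd _ h (MulEquiv.orderOf_eq φ d)

end Automorphisms

section OrderFour

variable {G : Type*} [Group G] {d c : G}

theorem eq_pow_cases_of_mem_zpowers_of_orderOf_eq_four (hd : orderOf d = 4)
    (hc : c ∈ zpowers d) : c = 1 ∨ c = d ∨ c = d ^ 2 ∨ c = d ^ 3 := by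
  classical
  rw [(isOfFinOrder_iff_pow_eq_one.mpr ⟨4, by norm_num, hd ▸ pow_orderOf_eq_one d⟩)
    |>.mem_zpowers_iff_mem_range_orderOf, hd] at hc
  simp only [Finset.mem_image, Finset.mem_range] at hc
  obtain ⟨i, hi, rfl⟩ := hc
  interval_cases i <;> simp

theorem eq_one_or_eq_sq_of_orderOf_eq_four (hd : orderOf d = 4) (hc : c ∈ zpowers d)
    (hc2 : c ^ 2 = 1) : c = 1 ∨ c = d ^ 2 := by
  have hd4 : d ^ 4 = 1 := hd ▸ pow_orderOf_eq_one d
  have hd2 : d ^ 2 ≠ 1 := pow_ne_one_of_lt_orderOf (by norm_num) (by omega)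
  rcases eq_pow_cases_of_mem_zpowers_of_orderOf_eq_four hd hc with rfl | rfl | rfl | rfl
  · exact .inl rfl
  · exact absurd hc2 hd2
  · exact .inr rfl
  · refine absurd ?_ hd2
    rw [← hc2, ← pow_mul, show 3 * 2 = 4 + 2 by rfl, pow_add, hd4, one_mul]

theorem eq_or_eq_inv_of_orderOf_eq_four (hd : orderOf d = 4) (hc : c ∈ zpowers d)
    (hc2 : c ^ 2 ≠ 1) : c = d ∨ c = d⁻¹ := by
  have hd4 : d ^ 4 = 1 := hd ▸ pow_orderOf_eq_one d
  rcases eq_pow_cases_of_mem_zpowers_of_orderOf_eq_four hd hc with rfl | rfl | rfl | rfl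
  · simp at hc2
  · exact .inl rfl
  · exact absurd (by rw [← pow_mul]; exact hd4) hc2
  · exact .inr (eq_inv_of_mul_eq_one_left (by rw [← pow_succ]; exact hd4))

theorem sq_apply_mem_zpowers_of_mem_center (hdZ : d ∈ center G) (hd : orderOf d = 4)
    (hH : (zpowers d).index = 2) (φ : MulAut G) : (φ ^ 2) d ∈ zpowers d := by
  have hd4 : d ^ 4 = 1 := hd ▸ pow_orderOf_eq_one d
  have hd2 : d ^ 2 ≠ 1 := pow_ne_one_of_lt_orderOf (by norm_num) (by omega)
  have hz : φ (d ^ 2) = d ^ 2 := by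
    refine (eq_one_or_eq_sq_of_orderOf_eq_four hd ?_ ?_).resolve_left ?_
    · rw [map_pow]; exact sq_mem_of_index_two hH _
    · rw [← map_pow, ← pow_mul, hd4, map_one]
    · rw [map_eq_one_iff _ φ.injective]; exact hd2
  rw [pow_two, MulAut.mul_apply]
  by_cases he : φ d ∈ zpowers d
  · obtain ⟨m, hm⟩ := mem_zpowers_iff.mp he
    rw [← hm, map_zpow]
    exact zpow_mem he m
  -- Otherwise `t = d⁻¹ φ d` is an involution outside `⟨d⟩` that `φ` maps into `⟨d⟩`,
  -- hence onto `1` or `d ^ 2 = φ (d ^ 2)`.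
  by_contra hf
  set t := d⁻¹ * φ d
  have ht : φ t ∈ zpowers d := by
    rw [map_mul, map_inv, mul_mem_iff_of_index_two hH, inv_mem_iff]
    exact iff_of_false he hf
  have ht2 : φ t ^ 2 = 1 := by
    have hcomm : Commute d⁻¹ (φ d) :=
      (show Commute d (φ d) from ((mem_center_iff.mp hdZ) (φ d)).symm).inv_left
    rw [← map_pow, hcomm.mul_pow, inv_pow, ← map_pow, hz, inv_mul_cancel, map_one]
  have htd : t ∈ zpowers d := by
    rcases eq_one_or_eq_sq_of_orderOf_eq_four hd ht ht2 with h1 | h1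
    · rw [map_eq_one_iff _ φ.injective] at h1
      rw [h1]; exact one_mem _
    · rw [← hz] at h1
      rw [φ.injective h1]; exact pow_mem (mem_zpowers d) 2
  exact he (by simpa [t] using mul_mem (mem_zpowers d) htd)

end OrderFour

section SmallGroups

variable {G : Type*} [Group G]

theorem index_zpowers_eq_two_iff [Finite G] {g : G} :
    (zpowers g).index = 2 ↔ Nat.card G = 2 * orderOf g := by
  have h := (zpowers g).card_mul_index
  rw [Nat.card_zpowers] at h
  constructor
  · intro h2; rw [← h, h2, mul_comm]
  · intro h2
    exact Nat.eq_of_mul_eq_mul_left (orderOf_pos g) (by rw [h, h2, mul_comm])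

theorem isKleinFour_of_card_eq_four_of_not_isCyclic (hG : Nat.card G = 4)
    (hcyc : ¬IsCyclic G) : IsKleinFour G where
  card_four := hG
  exponent_two := by
    have : Finite G := Nat.finite_of_card_ne_zero (by omega)
    have : Nontrivial G := by rw [← Finite.one_lt_card_iff_nontrivial]; omega
    refine (Monoid.exponent_eq_prime_iff Nat.prime_two).mpr fun g hg => ?_
    have hg4 : orderOf g ∣ 2 ^ 2 := by
      rw [show 2 ^ 2 = 4 from rfl, ← hG]; exact orderOf_dvd_natCard g
    obtain ⟨i, hi, hgi⟩ := (Nat.dvd_prime_pow Nat.prime_two).mp hg4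
    interval_cases i
    · exact absurd (orderOf_eq_one_iff.mp hgi) hg
    · exact hgi
    · exact absurd (isCyclic_of_orderOf_eq_card g (by rw [hgi, hG]; rfl)) hcyc

theorem ZMod.pow_val_add {m : ℕ} [NeZero m] {d : G} (hd : d ^ m = 1) (i j : ZMod m) :
    d ^ (i + j).val = d ^ i.val * d ^ j.val := by
  rw [ZMod.val_add, ← pow_add, ← pow_eq_pow_mod _ hd]

theorem ZMod.pow_val_sub {m : ℕ} [NeZero m] {d : G} (hd : d ^ m = 1) (i j : ZMod m) :
    d ^ (j - i).val = (d ^ i.val)⁻¹ * d ^ j.val := by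
  rw [eq_inv_mul_iff_mul_eq, ← ZMod.pow_val_add hd, add_sub_cancel]

def QuaternionGroup.lift {n : ℕ} [NeZero n] {d x : G} (hd : d ^ (2 * n) = 1)
    (hx : x ^ 2 = d ^ n) (hxd : x * d * x⁻¹ = d⁻¹) : QuaternionGroup n →* G where
  toFun
    | .a i => d ^ i.val
    | .xa i => x * d ^ i.val
  map_one' := by
    show d ^ (0 : ZMod (2 * n)).val = 1
    rw [ZMod.val_zero, pow_zero]
  map_mul' := by
    have hswap : ∀ i : ZMod (2 * n), d ^ i.val * x = x * (d ^ i.val)⁻¹ := fun i =>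
      calc d ^ i.val * x = ((d ^ i.val)⁻¹)⁻¹ * x := by rw [inv_inv]
        _ = (x * d ^ i.val * x⁻¹)⁻¹ * x := by rw [← conj_pow, hxd, inv_pow]
        _ = x * (d ^ i.val)⁻¹ := by group
    have hn : (n : ZMod (2 * n)).val = n :=
      ZMod.val_cast_of_lt (by have := NeZero.pos n; omega)
    rintro (i | i) (j | j)
    · exact ZMod.pow_val_add hd i j
    · show x * d ^ (j - i).val = d ^ i.val * (x * d ^ j.val)
      rw [ZMod.pow_val_sub hd, ← mul_assoc, ← mul_assoc, hswap]
    · show x * d ^ (i + j).val = x * d ^ i.val * d ^ j.val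
      rw [ZMod.pow_val_add hd, mul_assoc]
    · show d ^ ((n : ZMod (2 * n)) + j - i).val = x * d ^ i.val * (x * d ^ j.val)
      rw [add_sub_assoc, ZMod.pow_val_add hd, ZMod.pow_val_sub hd, hn, ← hx, mul_assoc,
        ← mul_assoc _ x, hswap, pow_two]
      group

theorem mem_center_of_conj_eq_of_index_eq_two {d x : G} (hH : (zpowers d).index = 2)
    (hxd : x ∉ zpowers d) (hc : x * d * x⁻¹ = d) : d ∈ center G := by
  have hpow : ∀ c ∈ zpowers d, Commute c d := fun c hc => by
    obtain ⟨m, rfl⟩ := mem_zpowers_iff.mp hc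
    exact (Commute.refl d).zpow_left m
  have hx : Commute x d := mul_inv_eq_iff_eq_mul.mp hc
  refine mem_center_iff.mpr fun g => ?_
  by_cases hg : g ∈ zpowers d
  · exact hpow g hg
  · have hxg : x⁻¹ * g ∈ zpowers d := by
      rw [mul_mem_iff_of_index_two hH, inv_mem_iff]; exact iff_of_false hxd hg
    rw [← mul_inv_cancel_left x g]
    exact hx.mul_left (hpow _ hxg)

theorem nonempty_mulEquiv_quaternionGroup_of_card_eq_eight [Finite G] (hG : Nat.card G = 8)
    {d x : G} (hd : orderOf d = 4) (hx : orderOf x = 4) (hxd : x ∉ zpowers d)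
    (hAut : ¬IsPGroup 2 (MulAut G)) : Nonempty (G ≃* QuaternionGroup 2) := by
  have hH : (zpowers d).index = 2 := index_zpowers_eq_two_iff.mpr (by rw [hG, hd])
  have hd4 : d ^ (2 * 2) = 1 := orderOf_dvd_iff_pow_eq_one.mp (by simp [hd])
  have hx2 : x ^ 2 = d ^ 2 := by
    refine (eq_one_or_eq_sq_of_orderOf_eq_four hd (sq_mem_of_index_two hH x) ?_).resolve_left
      (pow_ne_one_of_lt_orderOf (by norm_num) (by omega))
    rw [← pow_mul]; exact orderOf_dvd_iff_pow_eq_one.mp (by simp [hx])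
  have hconj := eq_or_eq_inv_of_orderOf_eq_four hd
    ((normal_of_index_eq_two hH).conj_mem d (mem_zpowers d) x)
    (by rw [conj_pow, Ne, conj_eq_one_iff]; exact pow_ne_one_of_lt_orderOf (by norm_num) (by omega))
  rcases hconj with hc | hc
  · refine absurd ((IsPGroup.of_card (n := 3) hG).mulAut_of_isCyclic_of_index_eq_two hH
      fun φ => ⟨1, ?_⟩) hAut
    rw [MonoidHom.map_zpowers, zpowers_le]
    exact sq_apply_mem_zpowers_of_mem_center (mem_center_of_conj_eq_of_index_eq_two hH hxd hc)
      hd hH φ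
  · let f := QuaternionGroup.lift hd4 hx2 hc
    have hdf : zpowers d ≤ f.range := zpowers_le.mpr ⟨.a 1, pow_one d⟩
    have hxf : x ∈ f.range := ⟨.xa 0, show x * d ^ (0 : ZMod (2 * 2)).val = x by simp⟩
    have hsurj : Function.Surjective f := fun g => by
      by_cases hg : g ∈ zpowers d
      · exact hdf hg
      · have hxg : x⁻¹ * g ∈ zpowers d := by
          rw [mul_mem_iff_of_index_two hH, inv_mem_iff]; exact iff_of_false hxd hg
        rw [← mul_inv_cancel_left x g]
        exact mul_mem hxf (hdf hxg)
    have hbij : Function.Bijective f := (Nat.bijective_iff_surjective_and_card f).mpr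
      ⟨hsurj, by rw [hG, Nat.card_eq_fintype_card, QuaternionGroup.card]⟩
    exact ⟨(MulEquiv.ofBijective f hbij).symm⟩

end SmallGroups

def HasCyclicSubgroupQuarticOutside (G : Type*) [Group G] : Prop :=
  ∃ C : Subgroup G, IsCyclic C ∧ C.index ∣ 2 ∧ ∀ x ∉ C, x ^ 4 = 1

theorem Subgroup.normal_of_index_dvd_two {G : Type*} [Group G] {H : Subgroup G}
    (h : H.index ∣ 2) : H.Normal := by
  rcases (Nat.dvd_prime Nat.prime_two).mp h with h1 | h2
  · rw [index_eq_one.mp h1]; infer_instance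
  · exact normal_of_index_eq_two h2

theorem HasCyclicSubgroupQuarticOutside.comap {G G' : Type*} [Group G] [Group G']
    (h : HasCyclicSubgroupQuarticOutside G') (f : G →* G') (hf : Function.Injective f) :
    HasCyclicSubgroupQuarticOutside G := by
  obtain ⟨C, hC, hidx, hout⟩ := h
  have := normal_of_index_dvd_two hidx
  refine ⟨C.comap f, isCyclic_of_injective (f.subgroupComap C) ?_, ?_, fun x hx => hf ?_⟩
  · exact fun a b hab => Subtype.ext (hf (congrArg Subtype.val hab))
  · rw [index_comap]; exact (relIndex_dvd_index_of_normal _ _).trans hidx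
  · rw [map_pow, hout _ hx, map_one]

theorem DihedralGroup.hasCyclicSubgroupQuarticOutside (n : ℕ) [NeZero n] :
    HasCyclicSubgroupQuarticOutside (DihedralGroup n) := by
  refine ⟨zpowers (r 1), inferInstance, ?_, ?_⟩
  · rw [index_zpowers_eq_two_iff.mpr (by rw [nat_card, orderOf_r_one])]
  · rintro (i | i) hi
    · exact absurd (mem_zpowers_iff.mpr ⟨i.val, by rw [zpow_natCast, r_one_pow,
        ZMod.natCast_zmod_val]⟩) hi
    · exact orderOf_dvd_iff_pow_eq_one.mp (by rw [orderOf_sr]; norm_num)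

theorem QuaternionGroup.hasCyclicSubgroupQuarticOutside (n : ℕ) [NeZero n] :
    HasCyclicSubgroupQuarticOutside (QuaternionGroup n) := by
  refine ⟨zpowers (a 1), inferInstance, ?_, ?_⟩
  · rw [index_zpowers_eq_two_iff.mpr (by rw [Nat.card_eq_fintype_card, card, orderOf_a_one]; ring)]
  · rintro (i | i) hi
    · exact absurd (mem_zpowers_iff.mpr ⟨i.val, by rw [zpow_natCast, a_one_pow,
        ZMod.natCast_zmod_val]⟩) hi
    · exact xa_pow_four i

theorem IsSemidihedral.hasCyclicSubgroupQuarticOutside {G : Type*} [Group G] [Finite G] {n : ℕ}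
    (hn : 2 ≤ n) (h : IsSemidihedral G n) : HasCyclicSubgroupQuarticOutside G := by
  obtain ⟨r, s, hr, hs, hsr, hgen, hcard⟩ := h
  have hH : (zpowers r).index = 2 := index_zpowers_eq_two_iff.mpr (by
    rw [hcard, hr, ← pow_succ']; congr 1; omega)
  have hsH : s ∉ zpowers r := fun hs' => by
    have : zpowers r = ⊤ := top_unique <| hgen ▸ (closure_le _).mpr
      (Set.insert_subset_iff.mpr ⟨mem_zpowers r, Set.singleton_subset_iff.mpr hs'⟩)
    rw [this, index_top] at hH
    omega
  refine ⟨zpowers r, inferInstance, hH ▸ dvd_rfl, fun x hx => ?_⟩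
  obtain ⟨m, hm⟩ := mem_zpowers_iff.mp (show s⁻¹ * x ∈ zpowers r by
    rw [mul_mem_iff_of_index_two hH, inv_mem_iff]; exact iff_of_false hsH hx)
  have hss : s * s = 1 := by rw [← pow_two, ← hs, pow_orderOf_eq_one]
  have hx2 : x ^ 2 = (r ^ 2 ^ (n - 2)) ^ m := by
    rw [← mul_inv_cancel_left s x, ← hm]
    calc (s * r ^ m) ^ 2 = s * r ^ m * s⁻¹ * (s * s) * r ^ m := by rw [pow_two]; group
      _ = (s * r * s⁻¹) ^ m * r ^ m := by rw [hss, mul_one, conj_zpow]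
      _ = (r ^ (2 ^ (n - 2) - 1) * r) ^ m := by
        rw [hsr, ((Commute.refl r).pow_left _).mul_zpow m]
      _ = (r ^ 2 ^ (n - 2)) ^ m := by rw [pow_sub_one_mul (by positivity)]
  rw [show 4 = 2 * 2 from rfl, pow_mul, hx2, ← zpow_natCast, ← zpow_mul, mul_comm, zpow_mul,
    zpow_natCast, ← pow_mul, ← pow_succ, show n - 2 + 1 = n - 1 by omega, ← hr,
    pow_orderOf_eq_one, one_zpow]

theorem HasCyclicSubgroupQuarticOutside.nonempty_mulEquiv_of_not_isPGroup_mulAut {G : Type*}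
    [Group G] [Finite G] (h : HasCyclicSubgroupQuarticOutside G) (hG : IsPGroup 2 G)
    (hAut : ¬IsPGroup 2 (MulAut G)) :
    Nonempty (G ≃* Multiplicative (ZMod 2) × Multiplicative (ZMod 2)) ∨
      Nonempty (G ≃* QuaternionGroup 2) := by
  obtain ⟨C, hC, hidx, hout⟩ := h
  have hnc : ¬IsCyclic G := fun h => hAut hG.mulAut_of_isCyclic
  obtain ⟨d, rfl⟩ := C.isCyclic_iff_exists_zpowers_eq_top.mp hC
  have hH : (zpowers d).index = 2 := by
    refine ((Nat.dvd_prime Nat.prime_two).mp hidx).resolve_left fun h1 => hnc ?_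
    exact isCyclic_iff_exists_zpowers_eq_top.mpr ⟨d, index_eq_one.mp h1⟩
  have hcard := index_zpowers_eq_two_iff.mp hH
  by_cases hchar : ∀ x ∉ zpowers d, orderOf x ≠ orderOf d
  · refine absurd (hG.mulAut_of_isCyclic_of_index_eq_two hH fun φ => ⟨0, ?_⟩) hAut
    simpa using map_zpowers_le_of_forall_orderOf_ne hchar φ
  push Not at hchar
  obtain ⟨x, hx, hxd⟩ := hchar
  obtain ⟨i, hi, hdi⟩ := (Nat.dvd_prime_pow Nat.prime_two).mp
    (show orderOf d ∣ 2 ^ 2 from hxd ▸ orderOf_dvd_of_pow_eq_one (hout x hx))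
  interval_cases i
  · exact absurd (orderOf_eq_one_iff.mp (hxd.trans hdi) ▸ one_mem _) hx
  · have := isKleinFour_of_card_eq_four_of_not_isCyclic (by rw [hcard, hdi]; rfl) hnc
    exact .inl ⟨IsKleinFour.nonempty_mulEquiv.some.trans (MulEquiv.prodMultiplicative _ _)⟩
  · exact .inr (nonempty_mulEquiv_quaternionGroup_of_card_eq_eight (by rw [hcard, hdi]; rfl)
      hdi (hxd.trans hdi) hx hAut)

/-- Let `S` be a finite `2`-group that is nonabelian of maximal class (dihedral,
semidihedral, or generalized quaternion of order `2^k`, `k ≥ 3`).  If `P ≤ S` has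
`Aut(P)` not a `2`-group, then `P ≅ C₂ × C₂` or `P ≅ Q₈`. -/
theorem stmt_6 (k : ℕ) (hk : 3 ≤ k) (S : Type*) [Group S] [Finite S]
    (hS : Nonempty (S ≃* DihedralGroup (2 ^ (k - 1))) ∨
      IsSemidihedral S k ∨
      Nonempty (S ≃* QuaternionGroup (2 ^ (k - 2))))
    (P : Subgroup S) (hP : ¬ IsPGroup 2 (MulAut P)) :
    Nonempty (P ≃* (Multiplicative (ZMod 2) × Multiplicative (ZMod 2))) ∨
      Nonempty (P ≃* QuaternionGroup 2) := by
  have hS' : IsPGroup 2 S ∧ HasCyclicSubgroupQuarticOutside S := by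
    rcases hS with ⟨⟨e⟩⟩ | hSD | ⟨⟨e⟩⟩
    · refine ⟨IsPGroup.of_card (n := k - 1 + 1) ?_,
        (DihedralGroup.hasCyclicSubgroupQuarticOutside _).comap e.toMonoidHom e.injective⟩
      rw [Nat.card_congr e.toEquiv, DihedralGroup.nat_card, pow_succ']
    · refine ⟨IsPGroup.of_card (n := k) ?_, hSD.hasCyclicSubgroupQuarticOutside (by omega)⟩
      obtain ⟨-, -, -, -, -, -, hcard⟩ := hSD
      exact hcard
    · refine ⟨IsPGroup.of_card (n := k - 2 + 2) ?_,
        (QuaternionGroup.hasCyclicSubgroupQuarticOutside _).comap e.toMonoidHom e.injective⟩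
      rw [Nat.card_congr e.toEquiv, Nat.card_eq_fintype_card, QuaternionGroup.card, pow_add]
      ring
  exact (hS'.2.comap P.subtype P.subtype_injective).nonempty_mulEquiv_of_not_isPGroup_mulAut
    (hS'.1.to_subgroup P) hP
end

section
/- Let S be a finite 2-group with a normal subgroup J that is a direct product J = D₁ × D₂ of two nonabelian dihedral 2-groups. Then every element s ∈ S normalizing J permutes the set {[D₁,D₁], [D₂,D₂]} of commutator subgroups; in particular, the product [D₁,D₁]·[D₂,D₂] is normal in S, and if z₁, z₂ are the central involutions of D₁ and D₂ respectively, then conjugation by any s ∈ S either fixes both z₁ and z₂ or swaps them. -/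
/-!
Conjugation by `s` restricts to an automorphism `φ` of `J ≅ D₁ × D₂`. Project `φ(D₁)` and
`φ(D₂)` to one factor `Dᵢ`: the two images commute elementwise and generate `Dᵢ`. Since `Dᵢ` is
nonabelian and the centralizer of each of its noncentral elements is abelian, one of the two
images is central. As `φ(D₁)` is nonabelian, `φ` either preserves both factors or swaps them
modulo the center. In the first case, the projection of `φ(D₁)` to `D₁` generates `D₁` together
with `Z(D₁)`. Since `Z(D₁) ≤ [D₁, D₁]`, it follows that the projection is all of `D₁`.
Commutators ignore central factors, so `φ` permutes `[D₁, D₁]` and `[D₂, D₂]`. Finally, `zᵢ` is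
the only nontrivial central element of `[Dᵢ, Dᵢ]`, so `φ` permutes `z₁` and `z₂` in the same way.
-/

open Subgroup MonoidHom Function
open scoped commutatorElement

theorem ZMod.val_add_val_of_add_self_eq_zero {n : ℕ} [NeZero n] {i : ZMod n} (h : i + i = 0)
    (hi : i ≠ 0) : i.val + i.val = n := by
  have hmod : (i.val + i.val) % n = 0 := by rw [← ZMod.val_add, h, ZMod.val_zero]
  have hlt := ZMod.val_lt i
  have hpos := ZMod.val_pos.mpr hi
  rcases Nat.lt_or_ge (i.val + i.val) n with hsmall | hbig
  · rw [Nat.mod_eq_of_lt hsmall] at hmod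
    omega
  · rw [Nat.mod_eq_sub_mod hbig, Nat.mod_eq_of_lt (by omega)] at hmod
    omega

namespace DihedralGroup

variable {n : ℕ}

theorem commute_r_r (i j : ZMod n) : Commute (r i) (r j) := by
  rw [commute_iff_eq, r_mul_r, r_mul_r, add_comm]

theorem commute_r_sr_iff (i j : ZMod n) : Commute (r i) (sr j) ↔ i + i = 0 := by
  rw [commute_iff_eq, r_mul_sr, sr_mul_r, sr.injEq]
  constructor <;> intro h <;> linear_combination -h

theorem commute_sr_sr_iff (i j : ZMod n) : Commute (sr i) (sr j) ↔ (j - i) + (j - i) = 0 := by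
  rw [commute_iff_eq, sr_mul_sr, sr_mul_sr, r.injEq]
  constructor <;> intro h <;> linear_combination h

theorem commutatorElement_r_sr (i j : ZMod n) : ⁅r i, sr j⁆ = r (i + i) := by
  rw [commutatorElement_def, r_mul_sr, inv_r, sr_mul_r, inv_sr, sr_mul_sr]
  ring_nf

theorem r_mem_center_iff (i : ZMod n) : r i ∈ center (DihedralGroup n) ↔ i + i = 0 := by
  refine ⟨fun h => (commute_r_sr_iff i 0).mp (mem_center_iff.mp h (sr 0)).symm,
    fun h => mem_center_iff.mpr ?_⟩
  rintro (j | j)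
  · exact commute_r_r j i
  · exact ((commute_r_sr_iff i j).mpr h).symm

theorem exists_eq_r_of_mem_center (hn : 2 < n) {x : DihedralGroup n} (hx : x ∈ center _) :
    ∃ i, x = r i ∧ i + i = 0 := by
  rcases x with i | i
  · exact ⟨i, rfl, (r_mem_center_iff i).mp hx⟩
  · have h2 : ((2 : ℕ) : ZMod n) = 0 := by
      rw [← (commute_r_sr_iff 1 i).mp (mem_center_iff.mp hx (r 1))]
      norm_num
    rw [ZMod.natCast_eq_zero_iff] at h2
    exact absurd (Nat.le_of_dvd two_pos h2) (by omega)

theorem commute_of_commute_of_notMem_center {x a b : DihedralGroup n} (hx : x ∉ center _)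
    (ha : Commute a x) (hb : Commute b x) : Commute a b := by
  rcases x with i | i
  · have hi : i + i ≠ 0 := fun h => hx ((r_mem_center_iff i).mpr h)
    have rotation : ∀ {a : DihedralGroup n}, Commute a (r i) → ∃ c, a = r c := by
      rintro (c | c) h
      · exact ⟨c, rfl⟩
      · exact absurd ((commute_r_sr_iff i c).mp h.symm) hi
    obtain ⟨c, rfl⟩ := rotation ha
    obtain ⟨d, rfl⟩ := rotation hb
    exact commute_r_r c d
  · rcases a with c | c <;> rcases b with d | d
    · exact commute_r_r c d
    · exact (commute_r_sr_iff c d).mpr ((commute_r_sr_iff c i).mp ha)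
    · exact ((commute_r_sr_iff d c).mpr ((commute_r_sr_iff d i).mp hb)).symm
    · rw [commute_sr_sr_iff] at ha hb ⊢
      linear_combination ha - hb

theorem eq_of_mem_center [NeZero n] (hn : 2 < n) {x y : DihedralGroup n} (hx : x ∈ center _)
    (hy : y ∈ center _) (hx1 : x ≠ 1) (hy1 : y ≠ 1) : x = y := by
  obtain ⟨i, rfl, hi⟩ := exists_eq_r_of_mem_center hn hx
  obtain ⟨j, rfl, hj⟩ := exists_eq_r_of_mem_center hn hy
  have hi' := ZMod.val_add_val_of_add_self_eq_zero hi (by rintro rfl; exact hx1 r_zero)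
  have hj' := ZMod.val_add_val_of_add_self_eq_zero hj (by rintro rfl; exact hy1 r_zero)
  rw [ZMod.val_injective n (by omega : i.val = j.val)]

theorem center_le_commutator [NeZero n] (hn : 4 ∣ n) :
    center (DihedralGroup n) ≤ commutator (DihedralGroup n) := by
  intro x hx
  have h2n : 2 < n := by
    have := Nat.le_of_dvd (Nat.pos_of_ne_zero (NeZero.ne n)) hn
    omega
  obtain ⟨i, rfl, hi⟩ := exists_eq_r_of_mem_center h2n hx
  obtain ⟨k, rfl⟩ : ∃ k : ZMod n, i = k + k := by
    by_cases hi0 : i = 0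
    · exact ⟨0, by rw [hi0, add_zero]⟩
    · have hval := ZMod.val_add_val_of_add_self_eq_zero hi hi0
      obtain ⟨m, rfl⟩ := hn
      refine ⟨(m : ZMod (4 * m)), ?_⟩
      rw [← ZMod.natCast_zmod_val i, show i.val = m + m by omega, Nat.cast_add]
  rw [← commutatorElement_r_sr k 0, _root_.commutator_def]
  exact commutator_mem_commutator (mem_top _) (mem_top _)

end DihedralGroup

namespace Subgroup

variable {G H : Type*} [Group G] [Group H]

theorem commutatorElement_mul_left_of_mem_center {c : G} (hc : c ∈ center G) (g k : G) :
    ⁅g * c, k⁆ = ⁅g, k⁆ := by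
  have hck : c * k = k * c := (mem_center_iff.mp hc k).symm
  rw [commutatorElement_def, commutatorElement_def, mul_inv_rev, mul_assoc g c k, hck]
  group

theorem commutator_sup_center_left (A B : Subgroup G) : ⁅A ⊔ center G, B⁆ = ⁅A, B⁆ := by
  refine le_antisymm (commutator_le.mpr fun g hg k hk => ?_) (commutator_mono le_sup_left le_rfl)
  obtain ⟨a, ha, c, hc, rfl⟩ := mem_sup_of_normal_right.mp hg
  rw [commutatorElement_mul_left_of_mem_center hc]
  exact commutator_mem_commutator ha hk

theorem commutator_sup_center (A : Subgroup G) :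
    ⁅A ⊔ center G, A ⊔ center G⁆ = ⁅A, A⁆ := by
  rw [commutator_sup_center_left, commutator_comm, commutator_sup_center_left]

theorem eq_top_of_sup_eq_top_of_le_center (hZ : center G ≤ _root_.commutator G)
    {A B : Subgroup G} (hB : B ≤ center G) (hAB : A ⊔ B = ⊤) : A = ⊤ := by
  have hA : A ⊔ center G = ⊤ := top_le_iff.mp (hAB ▸ sup_le_sup_left hB A)
  have hcomm : _root_.commutator G ≤ A := by
    rw [_root_.commutator_def, ← hA, commutator_sup_center]
    exact A.commutator_le_self
  exact top_le_iff.mp (hA ▸ sup_le le_rfl (hZ.trans hcomm))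

theorem le_center_or_le_center_of_sup_eq_top (hG : ¬ IsMulCommutative G)
    (hAC : ∀ x ∉ center G, ∀ a b : G, Commute a x → Commute b x → Commute a b)
    {A B : Subgroup G} (hAB : A ≤ centralizer B) (hsup : A ⊔ B = ⊤) :
    A ≤ center G ∨ B ≤ center G := by
  by_contra! h
  obtain ⟨⟨a, ha, ha'⟩, ⟨b, hb, hb'⟩⟩ :=
    And.imp SetLike.not_le_iff_exists.mp SetLike.not_le_iff_exists.mp h
  have hAA : A ≤ centralizer A := fun x hx y hy =>
    hAC b hb' y x (hAB hy b hb).symm (hAB hx b hb).symm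
  have hBB : B ≤ centralizer B := fun x hx y hy =>
    hAC a ha' y x (hAB ha y hy) (hAB ha x hx)
  have hBA : B ≤ centralizer A := le_centralizer_iff.mp hAB
  have htop : A ⊔ B ≤ centralizer (A ⊔ B : Subgroup G) :=
    sup_le (le_centralizer_iff.mp (sup_le hAA hBA)) (le_centralizer_iff.mp (sup_le hAB hBB))
  rw [hsup] at htop
  exact hG (center_eq_top_iff.mp (top_le_iff.mp fun x _ =>
    mem_center_iff.mpr fun g => htop (mem_top x) g (mem_top g)))

theorem map_commutator_of_range_eq_top {f : G →* H} (hf : f.range = ⊤) :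
    (_root_.commutator G).map f = _root_.commutator H := by
  rw [_root_.commutator_def, _root_.commutator_def, map_commutator, ← range_eq_map, hf]

theorem map_commutator_eq_of_mul_inv_mem_center {f g : G →* H}
    (h : ∀ x, f x * (g x)⁻¹ ∈ center H) :
    (_root_.commutator G).map f = (_root_.commutator G).map g := by
  have hrange : f.range ⊔ center H = g.range ⊔ center H := by
    refine le_antisymm (sup_le ?_ le_sup_right) (sup_le ?_ le_sup_right) <;> rintro _ ⟨x, rfl⟩
    · have hgx : g x ∈ g.range ⊔ center H := mem_sup_left (mem_range.mpr ⟨x, rfl⟩)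
      simpa using mul_mem (mem_sup_right (h x)) hgx
    · have hfx : f x ∈ f.range ⊔ center H := mem_sup_left (mem_range.mpr ⟨x, rfl⟩)
      simpa using mul_mem (mem_sup_right (inv_mem (h x))) hfx
  rw [_root_.commutator_def, map_commutator, map_commutator, ← range_eq_map, ← range_eq_map,
    ← commutator_sup_center, hrange, commutator_sup_center]

end Subgroup

namespace MonoidHom

variable {G₁ G₂ H K : Type*} [Group G₁] [Group G₂] [Group H] [Group K]

theorem range_comp_inl_sup_range_comp_inr {F : G₁ × G₂ →* K} (hF : Surjective F) :
    (F.comp (inl G₁ G₂)).range ⊔ (F.comp (inr G₁ G₂)).range = ⊤ := by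
  refine eq_top_iff.mpr fun k _ => ?_
  obtain ⟨p, rfl⟩ := hF k
  have h := mul_mem_sup
    (mem_range.mpr ⟨p.1, rfl⟩ : F (inl G₁ G₂ p.1) ∈ (F.comp (inl G₁ G₂)).range)
    (mem_range.mpr ⟨p.2, rfl⟩ : F (inr G₁ G₂ p.2) ∈ (F.comp (inr G₁ G₂)).range)
  rwa [← map_mul, inl_apply, inr_apply, Prod.fst_mul_snd] at h

theorem range_comp_inl_le_centralizer (F : G₁ × G₂ →* K) :
    (F.comp (inl G₁ G₂)).range ≤ centralizer (F.comp (inr G₁ G₂)).range := by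
  rintro _ ⟨x, rfl⟩ _ ⟨y, rfl⟩
  exact ((commute_inl_inr x y).map F).symm.eq

theorem isMulCommutative_of_injective_of_range_le_center {f : H →* G₁ × G₂}
    (hf : Injective f) (hfst : ((fst G₁ G₂).comp f).range ≤ center G₁)
    (hsnd : ((snd G₁ G₂).comp f).range ≤ center G₂) : IsMulCommutative H := by
  refine center_eq_top_iff.mp (top_le_iff.mp fun x _ => mem_center_iff.mpr fun y => hf ?_)
  have hfx : f x ∈ center (G₁ × G₂) := by
    rw [Subgroup.center_prod]
    exact ⟨hfst ⟨x, rfl⟩, hsnd ⟨x, rfl⟩⟩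
  rw [map_mul, map_mul, mem_center_iff.mp hfx]

theorem map_commutator_eq_map_inl {f : H →* G₁ × G₂}
    (hfst : ((fst G₁ G₂).comp f).range = ⊤) (hsnd : ((snd G₁ G₂).comp f).range ≤ center G₂) :
    (commutator H).map f = (commutator G₁).map (inl G₁ G₂) := by
  rw [map_commutator_eq_of_mul_inv_mem_center (g := (inl G₁ G₂).comp ((fst G₁ G₂).comp f)),
    ← map_map, map_commutator_of_range_eq_top hfst]
  intro x
  rw [Subgroup.center_prod]
  simpa [mem_prod] using hsnd ⟨x, rfl⟩

theorem map_commutator_eq_map_inr {f : H →* G₁ × G₂}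
    (hfst : ((fst G₁ G₂).comp f).range ≤ center G₁) (hsnd : ((snd G₁ G₂).comp f).range = ⊤) :
    (commutator H).map f = (commutator G₂).map (inr G₁ G₂) := by
  rw [map_commutator_eq_of_mul_inv_mem_center (g := (inr G₁ G₂).comp ((snd G₁ G₂).comp f)),
    ← map_map, map_commutator_of_range_eq_top hsnd]
  intro x
  rw [Subgroup.center_prod]
  simpa [mem_prod] using hfst ⟨x, rfl⟩

end MonoidHom

theorem MonoidHom.exists_mulEquiv_comp_eq_conj_comp {G H : Type*} [Group G] [Group H]
    {ψ : H →* G} (hψ : Injective ψ) [ψ.range.Normal] (s : G) :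
    ∃ φ : H ≃* H, ψ.comp φ.toMonoidHom = (MulAut.conj s).toMonoidHom.comp ψ := by
  set e := ofInjective hψ
  refine ⟨(e.trans (MulAut.conjNormal s)).trans e.symm, ext fun x => ?_⟩
  have he : ∀ y, ψ (e.symm y) = y := fun y => by
    rw [← ofInjective_apply hψ, MulEquiv.apply_symm_apply]
  simp [he, MulAut.conjNormal_apply, e, ofInjective_apply]

theorem MulEquiv.apply_eq_of_map_eq {G : Type*} [Group G] (φ : G ≃* G) {L L' : Subgroup G}
    (hφ : L.map φ.toMonoidHom = L') {z w : G} (hz : z ∈ L ⊓ center G) (hz1 : z ≠ 1)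
    (hw : ∀ p ∈ L' ⊓ center G, p ≠ 1 → p = w) : φ z = w :=
  hw _ ⟨hφ ▸ mem_map_of_mem _ hz.1, MulEquivClass.apply_mem_center φ hz.2⟩ (by simpa using hz1)

/-- The properties of nonabelian dihedral `2`-groups on which the Krull–Schmidt argument runs. -/
structure IsDihedralLike (G : Type*) [Group G] : Prop where
  not_isMulCommutative : ¬ IsMulCommutative G
  commute_of_commute_of_notMem_center :
    ∀ x ∉ center G, ∀ a b : G, Commute a x → Commute b x → Commute a b
  center_le_commutator : center G ≤ commutator G
  eq_of_mem_center : ∀ x ∈ center G, ∀ y ∈ center G, x ≠ 1 → y ≠ 1 → x = y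

theorem DihedralGroup.isDihedralLike {n : ℕ} [NeZero n] (hn : 4 ∣ n) :
    IsDihedralLike (DihedralGroup n) := by
  have h2n : 2 < n := by
    have := Nat.le_of_dvd (Nat.pos_of_ne_zero (NeZero.ne n)) hn
    omega
  exact ⟨not_commutative (by omega) (by omega),
    fun _ hx _ _ ha hb => commute_of_commute_of_notMem_center hx ha hb,
    center_le_commutator hn, fun _ hx _ hy => eq_of_mem_center h2n hx hy⟩

namespace IsDihedralLike

variable {G H G₁ G₂ : Type*} [Group G] [Group H] [Group G₁] [Group G₂]

theorem of_mulEquiv (hH : IsDihedralLike H) (e : G ≃* H) : IsDihedralLike G where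
  not_isMulCommutative hG := hH.not_isMulCommutative <| center_eq_top_iff.mp <|
    top_le_iff.mp fun y _ => by
      obtain ⟨x, rfl⟩ := e.surjective y
      exact MulEquivClass.apply_mem_center e (center_eq_top_iff.mpr hG ▸ mem_top x : x ∈ center G)
  commute_of_commute_of_notMem_center x hx a b ha hb := by
    have hx' : e x ∉ center H := fun h => hx ((MulEquivClass.apply_mem_center_iff e).mp h)
    simpa using (hH.commute_of_commute_of_notMem_center _ hx' _ _ (ha.map e) (hb.map e)).map
      e.symm.toMonoidHom
  center_le_commutator x hx := by
    have hmap : (commutator G).map e.toMonoidHom = commutator H :=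
      map_commutator_of_range_eq_top (range_eq_top.mpr e.surjective)
    obtain ⟨y, hy, hyx⟩ := hmap ▸ hH.center_le_commutator (MulEquivClass.apply_mem_center e hx)
    rwa [← e.injective hyx]
  eq_of_mem_center x hx y hy hx1 hy1 := e.injective <| hH.eq_of_mem_center _
    (MulEquivClass.apply_mem_center e hx) _ (MulEquivClass.apply_mem_center e hy)
    (by simpa using hx1) (by simpa using hy1)

theorem inl_mem_map_commutator_inf_center (h₁ : IsDihedralLike G₁) {z : G₁}
    (hz : z ∈ center G₁) : inl G₁ G₂ z ∈ (commutator G₁).map (inl G₁ G₂) ⊓ center (G₁ × G₂) :=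
  ⟨mem_map_of_mem _ (h₁.center_le_commutator hz),
    by rw [Subgroup.center_prod]; exact ⟨hz, one_mem _⟩⟩

theorem inr_mem_map_commutator_inf_center (h₂ : IsDihedralLike G₂) {z : G₂}
    (hz : z ∈ center G₂) : inr G₁ G₂ z ∈ (commutator G₂).map (inr G₁ G₂) ⊓ center (G₁ × G₂) :=
  ⟨mem_map_of_mem _ (h₂.center_le_commutator hz),
    by rw [Subgroup.center_prod]; exact ⟨one_mem _, hz⟩⟩

theorem eq_inl_of_mem (h₁ : IsDihedralLike G₁) {z : G₁} (hz : z ∈ center G₁) (hz1 : z ≠ 1) :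
    ∀ p ∈ (commutator G₁).map (inl G₁ G₂) ⊓ center (G₁ × G₂), p ≠ 1 → p = inl G₁ G₂ z := by
  rintro _ ⟨⟨x, -, rfl⟩, hxc⟩ hx1
  rw [Subgroup.center_prod] at hxc
  rw [inl_apply, inl_apply,
    h₁.eq_of_mem_center x hxc.1 z hz (by rintro rfl; exact hx1 rfl) hz1]

theorem eq_inr_of_mem (h₂ : IsDihedralLike G₂) {z : G₂} (hz : z ∈ center G₂) (hz1 : z ≠ 1) :
    ∀ p ∈ (commutator G₂).map (inr G₁ G₂) ⊓ center (G₁ × G₂), p ≠ 1 → p = inr G₁ G₂ z := by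
  rintro _ ⟨⟨x, -, rfl⟩, hxc⟩ hx1
  rw [Subgroup.center_prod] at hxc
  rw [inr_apply, inr_apply,
    h₂.eq_of_mem_center x hxc.2 z hz (by rintro rfl; exact hx1 rfl) hz1]

theorem fix_or_swap (h₁ : IsDihedralLike G₁) (h₂ : IsDihedralLike G₂)
    (φ : G₁ × G₂ ≃* G₁ × G₂) {z₁ : G₁} {z₂ : G₂} (hz₁ : z₁ ∈ center G₁) (hz₂ : z₂ ∈ center G₂)
    (hz₁1 : z₁ ≠ 1) (hz₂1 : z₂ ≠ 1) :
    (((commutator G₁).map (inl G₁ G₂)).map φ.toMonoidHom = (commutator G₁).map (inl G₁ G₂) ∧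
      ((commutator G₂).map (inr G₁ G₂)).map φ.toMonoidHom = (commutator G₂).map (inr G₁ G₂) ∧
      φ (inl G₁ G₂ z₁) = inl G₁ G₂ z₁ ∧ φ (inr G₁ G₂ z₂) = inr G₁ G₂ z₂) ∨
    (((commutator G₁).map (inl G₁ G₂)).map φ.toMonoidHom = (commutator G₂).map (inr G₁ G₂) ∧
      ((commutator G₂).map (inr G₁ G₂)).map φ.toMonoidHom = (commutator G₁).map (inl G₁ G₂) ∧
      φ (inl G₁ G₂ z₁) = inr G₁ G₂ z₂ ∧ φ (inr G₁ G₂ z₂) = inl G₁ G₂ z₁) := by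
  set F₁ := (fst G₁ G₂).comp φ.toMonoidHom
  set F₂ := (snd G₁ G₂).comp φ.toMonoidHom
  have sup₁ := range_comp_inl_sup_range_comp_inr (F := F₁) (Prod.fst_surjective.comp φ.surjective)
  have sup₂ := range_comp_inl_sup_range_comp_inr (F := F₂) (Prod.snd_surjective.comp φ.surjective)
  have hz₁K := h₁.inl_mem_map_commutator_inf_center (G₂ := G₂) hz₁
  have hz₂K := h₂.inr_mem_map_commutator_inf_center (G₁ := G₁) hz₂
  have hz₁1' : inl G₁ G₂ z₁ ≠ 1 := by simpa using hz₁1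
  have hz₂1' : inr G₁ G₂ z₂ ≠ 1 := by simpa using hz₂1
  have onto₁ : ∀ {A B : Subgroup G₁}, B ≤ center G₁ → A ⊔ B = ⊤ → A = ⊤ :=
    eq_top_of_sup_eq_top_of_le_center h₁.center_le_commutator
  have onto₂ : ∀ {A B : Subgroup G₂}, B ≤ center G₂ → A ⊔ B = ⊤ → A = ⊤ :=
    eq_top_of_sup_eq_top_of_le_center h₂.center_le_commutator
  have split₁ := le_center_or_le_center_of_sup_eq_top h₁.not_isMulCommutative
    h₁.commute_of_commute_of_notMem_center (range_comp_inl_le_centralizer F₁) sup₁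
  have split₂ := le_center_or_le_center_of_sup_eq_top h₂.not_isMulCommutative
    h₂.commute_of_commute_of_notMem_center (range_comp_inl_le_centralizer F₂) sup₂
  rcases split₁ with hα | hγ <;> rcases split₂ with hβ | hδ
  · exact absurd (isMulCommutative_of_injective_of_range_le_center
      (f := φ.toMonoidHom.comp (inl G₁ G₂)) (φ.injective.comp fun _ _ h => congrArg Prod.fst h)
      hα hβ) h₁.not_isMulCommutative
  · have hK₁ := (map_map _ _ _).trans
      (map_commutator_eq_map_inr (f := φ.toMonoidHom.comp (inl G₁ G₂)) hα (onto₂ hδ sup₂))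
    have hK₂ := (map_map _ _ _).trans (map_commutator_eq_map_inl
      (f := φ.toMonoidHom.comp (inr G₁ G₂)) (onto₁ hα ((sup_comm _ _).trans sup₁)) hδ)
    exact .inr ⟨hK₁, hK₂, φ.apply_eq_of_map_eq hK₁ hz₁K hz₁1' (h₂.eq_inr_of_mem hz₂ hz₂1),
      φ.apply_eq_of_map_eq hK₂ hz₂K hz₂1' (h₁.eq_inl_of_mem hz₁ hz₁1)⟩
  · have hK₁ := (map_map _ _ _).trans
      (map_commutator_eq_map_inl (f := φ.toMonoidHom.comp (inl G₁ G₂)) (onto₁ hγ sup₁) hβ)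
    have hK₂ := (map_map _ _ _).trans (map_commutator_eq_map_inr
      (f := φ.toMonoidHom.comp (inr G₁ G₂)) hγ (onto₂ hβ ((sup_comm _ _).trans sup₂)))
    exact .inl ⟨hK₁, hK₂, φ.apply_eq_of_map_eq hK₁ hz₁K hz₁1' (h₁.eq_inl_of_mem hz₁ hz₁1),
      φ.apply_eq_of_map_eq hK₂ hz₂K hz₂1' (h₂.eq_inr_of_mem hz₂ hz₂1)⟩
  · exact absurd (isMulCommutative_of_injective_of_range_le_center
      (f := φ.toMonoidHom.comp (inr G₁ G₂)) (φ.injective.comp fun _ _ h => congrArg Prod.snd h)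
      hγ hδ) h₂.not_isMulCommutative

theorem conj_fix_or_swap {D₁ D₂ : Subgroup G} [(D₁ ⊔ D₂).Normal]
    (hcomm : ∀ a ∈ D₁, ∀ b ∈ D₂, Commute a b) (hinf : D₁ ⊓ D₂ = ⊥)
    (h₁ : IsDihedralLike D₁) (h₂ : IsDihedralLike D₂) {z₁ z₂ : G} (hz₁ : z₁ ∈ D₁)
    (hz₂ : z₂ ∈ D₂) (hz₁c : ∀ d ∈ D₁, Commute z₁ d) (hz₂c : ∀ d ∈ D₂, Commute z₂ d)
    (hz₁1 : z₁ ≠ 1) (hz₂1 : z₂ ≠ 1) (s : G) :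
    (⁅D₁, D₁⁆.map (MulAut.conj s).toMonoidHom = ⁅D₁, D₁⁆ ∧
      ⁅D₂, D₂⁆.map (MulAut.conj s).toMonoidHom = ⁅D₂, D₂⁆ ∧
      s * z₁ * s⁻¹ = z₁ ∧ s * z₂ * s⁻¹ = z₂) ∨
    (⁅D₁, D₁⁆.map (MulAut.conj s).toMonoidHom = ⁅D₂, D₂⁆ ∧
      ⁅D₂, D₂⁆.map (MulAut.conj s).toMonoidHom = ⁅D₁, D₁⁆ ∧
      s * z₁ * s⁻¹ = z₂ ∧ s * z₂ * s⁻¹ = z₁) := by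
  set ψ := D₁.subtype.noncommCoprod D₂.subtype fun a b => hcomm _ a.2 _ b.2
  have hψ : Injective ψ := (noncommCoprod_injective _ _ _).mpr ⟨D₁.subtype_injective,
    D₂.subtype_injective, by rw [range_subtype, range_subtype, disjoint_iff, hinf]⟩
  have hrange : ψ.range = D₁ ⊔ D₂ :=
    (noncommCoprod_range _ _ _).trans (by rw [range_subtype, range_subtype])
  have : ψ.range.Normal := hrange ▸ inferInstance
  obtain ⟨φ, hφ⟩ := exists_mulEquiv_comp_eq_conj_comp hψ s
  have hmap : ∀ K : Subgroup (D₁ × D₂),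
      (K.map ψ).map (MulAut.conj s).toMonoidHom = (K.map φ.toMonoidHom).map ψ :=
    fun K => by rw [map_map, map_map, hφ]
  have hconj : ∀ p, s * ψ p * s⁻¹ = ψ (φ p) := fun p => (DFunLike.congr_fun hφ p).symm
  have hψ₁ : ψ.comp (inl D₁ D₂) = D₁.subtype := noncommCoprod_comp_inl _ _ _
  have hψ₂ : ψ.comp (inr D₁ D₂) = D₂.subtype := noncommCoprod_comp_inr _ _ _
  have hK₁ : ((commutator D₁).map (inl D₁ D₂)).map ψ = ⁅D₁, D₁⁆ := by
    rw [map_map, hψ₁, map_subtype_commutator]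
  have hK₂ : ((commutator D₂).map (inr D₁ D₂)).map ψ = ⁅D₂, D₂⁆ := by
    rw [map_map, hψ₂, map_subtype_commutator]
  have hψz₁ : ψ (inl D₁ D₂ ⟨z₁, hz₁⟩) = z₁ := DFunLike.congr_fun hψ₁ ⟨z₁, hz₁⟩
  have hψz₂ : ψ (inr D₁ D₂ ⟨z₂, hz₂⟩) = z₂ := DFunLike.congr_fun hψ₂ ⟨z₂, hz₂⟩
  have hzc₁ : (⟨z₁, hz₁⟩ : D₁) ∈ center D₁ :=
    mem_center_iff.mpr fun d => Subtype.ext (hz₁c d d.2).symm.eq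
  have hzc₂ : (⟨z₂, hz₂⟩ : D₂) ∈ center D₂ :=
    mem_center_iff.mpr fun d => Subtype.ext (hz₂c d d.2).symm.eq
  rcases h₁.fix_or_swap h₂ φ hzc₁ hzc₂ (by simpa using hz₁1) (by simpa using hz₂1) with
    ⟨e₁, e₂, e₃, e₄⟩ | ⟨e₁, e₂, e₃, e₄⟩
  · exact .inl ⟨by rw [← hK₁, hmap, e₁], by rw [← hK₂, hmap, e₂],
      by rw [← hψz₁, hconj, e₃], by rw [← hψz₂, hconj, e₄]⟩
  · exact .inr ⟨by rw [← hK₁, hmap, e₁, hK₂], by rw [← hK₂, hmap, e₂, hK₁],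
      by rw [← hψz₁, hconj, e₃, hψz₂], by rw [← hψz₂, hconj, e₄, hψz₁]⟩

end IsDihedralLike

theorem stmt_8_general (S : Type*) [Group S]
    (J D₁ D₂ : Subgroup S) (hJ : J.Normal)
    (k₁ k₂ : ℕ) (hk₁ : 3 ≤ k₁) (hk₂ : 3 ≤ k₂)
    (hD₁ : Nonempty (D₁ ≃* DihedralGroup (2 ^ (k₁ - 1))))
    (hD₂ : Nonempty (D₂ ≃* DihedralGroup (2 ^ (k₂ - 1))))
    (hsup : D₁ ⊔ D₂ = J) (hinf : D₁ ⊓ D₂ = ⊥)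
    (hcomm : ∀ a ∈ D₁, ∀ b ∈ D₂, Commute a b)
    (z₁ z₂ : S) (hz₁ : z₁ ∈ D₁) (hz₂ : z₂ ∈ D₂)
    (hz₁o : orderOf z₁ = 2) (hz₂o : orderOf z₂ = 2)
    (hz₁c : ∀ d ∈ D₁, Commute z₁ d) (hz₂c : ∀ d ∈ D₂, Commute z₂ d) :
    (∀ s : S,
      (Subgroup.map (MulAut.conj s).toMonoidHom ⁅D₁, D₁⁆ = ⁅D₁, D₁⁆ ∧
        Subgroup.map (MulAut.conj s).toMonoidHom ⁅D₂, D₂⁆ = ⁅D₂, D₂⁆) ∨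
      (Subgroup.map (MulAut.conj s).toMonoidHom ⁅D₁, D₁⁆ = ⁅D₂, D₂⁆ ∧
        Subgroup.map (MulAut.conj s).toMonoidHom ⁅D₂, D₂⁆ = ⁅D₁, D₁⁆)) ∧
    (⁅D₁, D₁⁆ ⊔ ⁅D₂, D₂⁆ : Subgroup S).Normal ∧
    (∀ s : S,
      (s * z₁ * s⁻¹ = z₁ ∧ s * z₂ * s⁻¹ = z₂) ∨
      (s * z₁ * s⁻¹ = z₂ ∧ s * z₂ * s⁻¹ = z₁)) := by
  have dihedral : ∀ {D : Subgroup S} {k : ℕ}, 3 ≤ k →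
      Nonempty (D ≃* DihedralGroup (2 ^ (k - 1))) → IsDihedralLike D := fun {_ k} hk ⟨e⟩ =>
    (DihedralGroup.isDihedralLike (pow_dvd_pow 2 (by omega : 2 ≤ k - 1))).of_mulEquiv e
  have ne_one : ∀ {z : S}, orderOf z = 2 → z ≠ 1 := fun hz h => by simp [h] at hz
  subst hsup
  have key := IsDihedralLike.conj_fix_or_swap hcomm hinf (dihedral hk₁ hD₁) (dihedral hk₂ hD₂)
    hz₁ hz₂ hz₁c hz₂c (ne_one hz₁o) (ne_one hz₂o)
  refine ⟨fun s => (key s).imp (fun h => ⟨h.1, h.2.1⟩) (fun h => ⟨h.1, h.2.1⟩),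
    normal_iff_map_conj_eq.mpr fun s => ?_, fun s => (key s).imp (·.2.2) (·.2.2)⟩
  change (⁅D₁, D₁⁆ ⊔ ⁅D₂, D₂⁆).map (MulAut.conj s).toMonoidHom = _
  rcases key s with ⟨h₁, h₂, -⟩ | ⟨h₁, h₂, -⟩
  · rw [Subgroup.map_sup, h₁, h₂]
  · rw [Subgroup.map_sup, h₁, h₂, sup_comm]

/-- Let `S` be a finite `2`-group with a normal subgroup `J` which is the internal
direct product of two nonabelian dihedral `2`-subgroups `D₁`, `D₂`.  Then every
element of `S` permutes the pair of commutator subgroups `{[D₁,D₁],[D₂,D₂]}`; in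
particular `[D₁,D₁]·[D₂,D₂]` is normal in `S`, and conjugation by any `s ∈ S`
either fixes both central involutions `z₁, z₂` or swaps them. -/
theorem stmt_8 (S : Type*) [Group S] [Finite S] (hS : IsPGroup 2 S)
    (J D₁ D₂ : Subgroup S) (hJ : J.Normal)
    (k₁ k₂ : ℕ) (hk₁ : 3 ≤ k₁) (hk₂ : 3 ≤ k₂)
    (hD₁ : Nonempty (D₁ ≃* DihedralGroup (2 ^ (k₁ - 1))))
    (hD₂ : Nonempty (D₂ ≃* DihedralGroup (2 ^ (k₂ - 1))))
    (hsup : D₁ ⊔ D₂ = J) (hinf : D₁ ⊓ D₂ = ⊥)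
    (hcomm : ∀ a ∈ D₁, ∀ b ∈ D₂, Commute a b)
    (z₁ z₂ : S) (hz₁ : z₁ ∈ D₁) (hz₂ : z₂ ∈ D₂)
    (hz₁o : orderOf z₁ = 2) (hz₂o : orderOf z₂ = 2)
    (hz₁c : ∀ d ∈ D₁, Commute z₁ d) (hz₂c : ∀ d ∈ D₂, Commute z₂ d) :
    (∀ s : S,
      (Subgroup.map (MulAut.conj s).toMonoidHom ⁅D₁, D₁⁆ = ⁅D₁, D₁⁆ ∧
        Subgroup.map (MulAut.conj s).toMonoidHom ⁅D₂, D₂⁆ = ⁅D₂, D₂⁆) ∨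
      (Subgroup.map (MulAut.conj s).toMonoidHom ⁅D₁, D₁⁆ = ⁅D₂, D₂⁆ ∧
        Subgroup.map (MulAut.conj s).toMonoidHom ⁅D₂, D₂⁆ = ⁅D₁, D₁⁆)) ∧
    (⁅D₁, D₁⁆ ⊔ ⁅D₂, D₂⁆ : Subgroup S).Normal ∧
    (∀ s : S,
      (s * z₁ * s⁻¹ = z₁ ∧ s * z₂ * s⁻¹ = z₂) ∨
      (s * z₁ * s⁻¹ = z₂ ∧ s * z₂ * s⁻¹ = z₁)) :=
  stmt_8_general S J D₁ D₂ hJ k₁ k₂ hk₁ hk₂ hD₁ hD₂ hsup hinf hcomm z₁ z₂ hz₁ hz₂ hz₁o hz₂o hz₁c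
    hz₂c
end

section
/- Let S be a finite 2-group and P, P' ⊴ S two normal subgroups, both dihedral of order 2^k with k ≥ 3, such that Z(P) ∩ Z(P') = 1. If P ∩ P' ≠ 1 then Z(P') ≤ P, which forces Z(P') ≤ Z(P), a contradiction; hence P ∩ P' = 1 and [P, P'] = 1, so PP' = P × P'. -/
/-!
A nontrivial normal subgroup of a finite `p`-group meets the centre nontrivially. Since
`P ⊓ P'` is normal and its central elements lie in both `Z(P)` and `Z(P')`, the hypothesis
forces `P ⊓ P' = ⊥`. Disjoint normal subgroups commute elementwise, so
`⁅P, P'⁆ ≤ P ⊓ P' = ⊥` and multiplication `P × P' → P ⊔ P'` is an isomorphism.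
-/

open Subgroup

namespace IsPGroup

variable {p : ℕ} [Fact p.Prime] {G : Type*} [Group G] [Finite G]

theorem inf_center_ne_bot (hG : IsPGroup p G) {N : Subgroup G} [N.Normal] (hN : N ≠ ⊥) :
    N ⊓ center G ≠ ⊥ := by
  obtain ⟨n, hn, hcard⟩ :=
    (hG.to_subgroup N).nontrivial_iff_card.mp (N.nontrivial_iff_ne_bot.mpr hN)
  -- Conjugation on `N` fixes `1`, and `p ∣ |N|`, so it fixes some other element too.
  obtain ⟨z, hz, hz1⟩ :=
    (hG.of_equiv ConjAct.toConjAct).exists_fixed_point_of_prime_dvd_card_of_fixed_point (α := N)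
      (by rw [hcard]; exact dvd_pow_self p hn.ne') (a := 1) (fun g => smul_one g)
  have hzc : (z : G) ∈ center G := by
    refine mem_center_iff.mpr fun g => ?_
    have := congrArg Subtype.val (hz (ConjAct.toConjAct g))
    rw [ConjAct.Subgroup.val_conj_smul, ConjAct.toConjAct_smul] at this
    rw [← mul_inv_eq_iff_eq_mul, this]
  intro h
  have : (z : G) ∈ N ⊓ center G := ⟨z.2, hzc⟩
  exact hz1 (Subtype.ext (mem_bot.mp (h ▸ this))).symm

theorem inf_eq_bot_of_inf_centers_eq_bot (hG : IsPGroup p G) {H K : Subgroup G}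
    [H.Normal] [K.Normal] (h : (H ⊓ centralizer H) ⊓ (K ⊓ centralizer K) = ⊥) :
    H ⊓ K = ⊥ := by
  by_contra hHK
  refine hG.inf_center_ne_bot hHK (le_bot_iff.mp (h ▸ ?_))
  have hZ {L : Subgroup G} : center G ≤ centralizer L := center_le_centralizer _
  exact le_inf (le_inf (inf_le_left.trans inf_le_left) (inf_le_right.trans hZ))
    (le_inf (inf_le_left.trans inf_le_right) (inf_le_right.trans hZ))

end IsPGroup

namespace Subgroup

variable {G : Type*} [Group G] {H K : Subgroup G}

noncomputable def prodMulEquivSupOfDisjoint (hH : H.Normal) (hK : K.Normal) (h : Disjoint H K) :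
    H × K ≃* (H ⊔ K : Subgroup G) :=
  let f := H.subtype.noncommCoprod K.subtype
    fun x y => commute_of_normal_of_disjoint H K hH hK h x y x.2 y.2
  have hf : Function.Injective f := (MonoidHom.noncommCoprod_injective _ _ _).mpr
    ⟨H.subtype_injective, K.subtype_injective, by simpa only [range_subtype] using h⟩
  (MonoidHom.ofInjective hf).trans <| MulEquiv.subgroupCongr <|
    (MonoidHom.noncommCoprod_range _ _ _).trans (by rw [range_subtype, range_subtype])

end Subgroup

theorem stmt_10_general (S : Type*) [Group S] [Finite S]
    (hS : IsPGroup 2 S) (P P' : Subgroup S) (hn : P.Normal) (hn' : P'.Normal)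
    (hZ : (P ⊓ Subgroup.centralizer (P : Set S)) ⊓
        (P' ⊓ Subgroup.centralizer (P' : Set S)) = ⊥) :
    P ⊓ P' = ⊥ ∧ ⁅P, P'⁆ = ⊥ ∧ Nonempty ((P ⊔ P' : Subgroup S) ≃* (P × P')) := by
  have : Fact (Nat.Prime 2) := ⟨Nat.prime_two⟩
  have hinf : P ⊓ P' = ⊥ := hS.inf_eq_bot_of_inf_centers_eq_bot hZ
  refine ⟨hinf, le_bot_iff.mp (hinf ▸ commutator_le_inf P P'), ?_⟩
  exact ⟨(prodMulEquivSupOfDisjoint hn hn' (disjoint_iff.mpr hinf)).symm⟩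

/-- Let `P`, `P'` be normal subgroups of a finite `2`-group `S`, both dihedral of
order `2^k` (`k ≥ 3`), with `Z(P) ∩ Z(P') = 1`.  Then `P ∩ P' = 1` and
`[P,P'] = 1`, so `PP' = P × P'`. -/
theorem stmt_10 (k : ℕ) (hk : 3 ≤ k) (S : Type*) [Group S] [Finite S]
    (hS : IsPGroup 2 S) (P P' : Subgroup S) (hn : P.Normal) (hn' : P'.Normal)
    (hP : Nonempty (P ≃* DihedralGroup (2 ^ (k - 1))))
    (hP' : Nonempty (P' ≃* DihedralGroup (2 ^ (k - 1))))
    (hZ : (P ⊓ Subgroup.centralizer (P : Set S)) ⊓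
        (P' ⊓ Subgroup.centralizer (P' : Set S)) = ⊥) :
    P ⊓ P' = ⊥ ∧ ⁅P, P'⁆ = ⊥ ∧ Nonempty ((P ⊔ P' : Subgroup S) ≃* (P × P')) :=
  stmt_10_general S hS P P' hn hn' hZ
end

section
/- Let S be the group with presentation ⟨d, c, f, e, h, a | d^{2^{k-1}} = c^{2^{k-1}} = f² = e² = a² = 1, [d,c] = [f,e] = 1, d^f = d⁻¹, c^e = c⁻¹, c^a = d, e^a = f, h² = d·d^{2^{k-2}}·c^{2^{k-2}}, e^h = ec, h^a = feh⟩ with k ≥ 3, and let J = ⟨c, e, d, f⟩ and x = d^{2^{k-2}}, z = c^{2^{k-2}}. Then the coset Jh contains no involutions, i.e. for all j ∈ J, (jh)² ≠ 1. -/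
namespace Stmt13

/-- Generators `d, c, f, e, h, a` indexed by `Fin 6` (in that order). -/
def dg : FreeGroup (Fin 6) := FreeGroup.of 0
def cg : FreeGroup (Fin 6) := FreeGroup.of 1
def fg : FreeGroup (Fin 6) := FreeGroup.of 2
def eg : FreeGroup (Fin 6) := FreeGroup.of 3
def hg : FreeGroup (Fin 6) := FreeGroup.of 4
def ag : FreeGroup (Fin 6) := FreeGroup.of 5

/-- Relators of the presentation
`⟨d,c,f,e,h,a ∣ d^{2^{k-1}} = c^{2^{k-1}} = f² = e² = a² = 1, [d,c] = [f,e] = 1,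
d^f = d⁻¹, c^e = c⁻¹, c^a = d, e^a = f,
h² = d·d^{2^{k-2}}·c^{2^{k-2}}, e^h = ec, h^a = feh⟩`. -/
def rels (k : ℕ) : Set (FreeGroup (Fin 6)) :=
  {dg ^ 2 ^ (k - 1), cg ^ 2 ^ (k - 1), fg ^ 2, eg ^ 2, ag ^ 2,
   dg * cg * dg⁻¹ * cg⁻¹, fg * eg * fg⁻¹ * eg⁻¹,
   fg⁻¹ * dg * fg * dg,
   eg⁻¹ * cg * eg * cg,
   ag⁻¹ * cg * ag * dg⁻¹,
   ag⁻¹ * eg * ag * fg⁻¹,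
   hg ^ 2 * (dg * dg ^ 2 ^ (k - 2) * cg ^ 2 ^ (k - 2))⁻¹,
   hg⁻¹ * eg * hg * (eg * cg)⁻¹,
   ag⁻¹ * hg * ag * (fg * eg * hg)⁻¹}

/-- The group `S` with the above presentation. -/
abbrev S (k : ℕ) := PresentedGroup (rels k)

def d (k : ℕ) : S k := PresentedGroup.of 0
def c (k : ℕ) : S k := PresentedGroup.of 1
def f (k : ℕ) : S k := PresentedGroup.of 2
def e (k : ℕ) : S k := PresentedGroup.of 3
def h (k : ℕ) : S k := PresentedGroup.of 4
def a (k : ℕ) : S k := PresentedGroup.of 5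

/-- `J = ⟨c, e, d, f⟩`. -/
def J (k : ℕ) : Subgroup (S k) := Subgroup.closure {c k, e k, d k, f k}

/-!
Map `S` to the permutations of `(ℤ/2ᵏ)²` by coordinatewise affine maps and the coordinate swap
(`a`). The images of `c, e, d, f`, hence of all of `J`, act on the second coordinate as
`y ↦ u y + 2s` with `u ∈ {1, v}`, `v = 2^(k-1) - 1`, while `h` acts there as `y ↦ y + 2^(k-2) + 1`.
So `(jh)²` sends the second coordinate `0` to `(u + 1) y` with `y` odd, i.e. to `2 y` or
`2^(k-1) y`, which is nonzero mod `2ᵏ`.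
-/

section AffinePair

lemma prodComm_mul_self (R : Type*) :
    (Equiv.prodComm R R : Equiv.Perm (R × R)) * Equiv.prodComm R R = 1 := by
  ext p <;> simp

variable {R : Type*} [CommRing R]

def affinePair (u₁ : Rˣ) (t₁ : R) (u₂ : Rˣ) (t₂ : R) : Equiv.Perm (R × R) where
  toFun p := (u₁ * p.1 + t₁, u₂ * p.2 + t₂)
  invFun p := (↑u₁⁻¹ * (p.1 - t₁), ↑u₂⁻¹ * (p.2 - t₂))
  left_inv p := by simp
  right_inv p := by simp

@[simp]
lemma affinePair_apply (u₁ : Rˣ) (t₁ : R) (u₂ : Rˣ) (t₂ : R) (p : R × R) :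
    affinePair u₁ t₁ u₂ t₂ p = (u₁ * p.1 + t₁, u₂ * p.2 + t₂) :=
  rfl

lemma affinePair_one_zero : affinePair (1 : Rˣ) 0 1 0 = 1 := by
  ext p <;> simp

lemma affinePair_eq_one {t₁ t₂ : R} (h₁ : t₁ = 0) (h₂ : t₂ = 0) : affinePair 1 t₁ 1 t₂ = 1 := by
  rw [h₁, h₂, affinePair_one_zero]

lemma affinePair_mul (u₁ : Rˣ) (t₁ : R) (u₂ : Rˣ) (t₂ : R) (w₁ : Rˣ) (s₁ : R) (w₂ : Rˣ) (s₂ : R) :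
    affinePair u₁ t₁ u₂ t₂ * affinePair w₁ s₁ w₂ s₂ =
      affinePair (u₁ * w₁) (u₁ * s₁ + t₁) (u₂ * w₂) (u₂ * s₂ + t₂) := by
  ext p <;> simp <;> ring

lemma affinePair_inv (u₁ : Rˣ) (t₁ : R) (u₂ : Rˣ) (t₂ : R) :
    (affinePair u₁ t₁ u₂ t₂)⁻¹ = affinePair u₁⁻¹ (-(↑u₁⁻¹ * t₁)) u₂⁻¹ (-(↑u₂⁻¹ * t₂)) := by
  rw [inv_eq_iff_mul_eq_one, affinePair_mul, ← affinePair_one_zero]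
  simp

lemma affinePair_one_one_pow (t₁ t₂ : R) (n : ℕ) :
    affinePair 1 t₁ 1 t₂ ^ n = affinePair 1 (n * t₁) 1 (n * t₂) := by
  induction n with
  | zero => simp [affinePair_one_zero]
  | succ n ih =>
    rw [pow_succ, ih, affinePair_mul]
    push_cast
    simp only [mul_one, one_mul]
    ring_nf

lemma affinePair_conj_prodComm (u₁ : Rˣ) (t₁ : R) (u₂ : Rˣ) (t₂ : R) :
    (Equiv.prodComm R R)⁻¹ * affinePair u₁ t₁ u₂ t₂ * Equiv.prodComm R R =
      affinePair u₂ t₂ u₁ t₁ := by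
  ext p <;> simp [Equiv.Perm.inv_def]

def secondCoordAffine (M : Subgroup Rˣ) : Subgroup (Equiv.Perm (R × R)) where
  carrier := {σ | ∃ u ∈ M, ∃ s : R, ∀ p, (σ p).2 = u * p.2 + 2 * s}
  one_mem' := ⟨1, M.one_mem, 0, fun p => by simp⟩
  mul_mem' := by
    rintro σ τ ⟨u, hu, s, hσ⟩ ⟨w, hw, r, hτ⟩
    exact ⟨u * w, M.mul_mem hu hw, u * r + s, fun p => by
      rw [Equiv.Perm.mul_apply, hσ, hτ, Units.val_mul]; ring⟩
  inv_mem' := by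
    rintro σ ⟨u, hu, s, hσ⟩
    refine ⟨u⁻¹, M.inv_mem hu, -(↑u⁻¹ * s), fun p => ?_⟩
    have h := hσ (σ⁻¹ p)
    rw [← Equiv.Perm.mul_apply, mul_inv_cancel, Equiv.Perm.one_apply] at h
    rw [h, mul_add, ← mul_assoc, Units.inv_mul, one_mul]
    ring

end AffinePair

lemma eq_one_or_eq_of_mem_zpowers {G : Type*} [Group G] {g u : G} (hg : g * g = 1)
    (hu : u ∈ Subgroup.zpowers g) : u = 1 ∨ u = g := by
  obtain ⟨k, rfl⟩ := Subgroup.mem_zpowers_iff.mp hu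
  obtain ⟨j, rfl | rfl⟩ := Int.even_or_odd' k
  · left
    rw [zpow_mul, zpow_two, hg, one_zpow]
  · right
    rw [zpow_add_one, zpow_mul, zpow_two, hg, one_zpow, one_mul]

lemma two_pow_eq_zero_iff {n i : ℕ} : (2 : ZMod (2 ^ n)) ^ i = 0 ↔ n ≤ i := by
  rw [← Nat.pow_dvd_pow_iff_le_right (by norm_num : 1 < 2), ← ZMod.natCast_eq_zero_iff]
  push_cast
  rfl

lemma isUnit_of_odd {n : ℕ} {y : ZMod (2 ^ n)} (hy : Odd y) : IsUnit y := by
  obtain ⟨s, rfl⟩ := hy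
  refine IsNilpotent.isUnit_add_one ⟨n, ?_⟩
  rw [mul_pow, two_pow_eq_zero_iff.mpr le_rfl, zero_mul]

lemma two_pow_mul_ne_zero_of_odd {n i : ℕ} (hi : i < n) {y : ZMod (2 ^ n)} (hy : Odd y) :
    (2 : ZMod (2 ^ n)) ^ i * y ≠ 0 := by
  rw [Ne, (isUnit_of_odd hy).mul_left_eq_zero, two_pow_eq_zero_iff]
  omega

abbrev Z (m : ℕ) := ZMod (2 ^ (m + 3))

/-- The square root `2 ^ (k - 1) - 1` of `1` in `ℤ/2ᵏ` (here `k = m + 3`): like `-1` it satisfies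
`2 * v = -2`, but `v + 1 ≠ 0`. -/
def v (m : ℕ) : (Z m)ˣ where
  val := 2 ^ (m + 2) - 1
  inv := 2 ^ (m + 2) - 1
  val_inv := by linear_combination (2 * (2 : Z m) ^ m - 1) * two_pow_eq_zero_iff.mpr le_rfl
  inv_val := by linear_combination (2 * (2 : Z m) ^ m - 1) * two_pow_eq_zero_iff.mpr le_rfl

lemma coe_v (m : ℕ) : ((v m : (Z m)ˣ) : Z m) = 2 ^ (m + 2) - 1 := rfl

lemma v_mul_self (m : ℕ) : v m * v m = 1 := Units.ext (v m).val_inv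

lemma v_inv (m : ℕ) : (v m)⁻¹ = v m := inv_eq_of_mul_eq_one_right (v_mul_self m)

def modelGen (m : ℕ) : Fin 6 → Equiv.Perm (Z m × Z m) :=
  ![affinePair 1 0 1 2,
    affinePair 1 2 1 0,
    affinePair 1 0 (v m) 0,
    affinePair (v m) 0 1 0,
    affinePair (v m) (2 ^ (m + 1) - 1) 1 (2 ^ (m + 1) + 1),
    Equiv.prodComm _ _]

lemma lift_modelGen_rels (m : ℕ) : ∀ r ∈ rels (m + 3), FreeGroup.lift (modelGen m) r = 1 := by
  have h2 : (2 : Z m) ^ (m + 3) = 0 := two_pow_eq_zero_iff.mpr le_rfl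
  intro r hr
  simp only [rels, show m + 3 - 1 = m + 2 from rfl, show m + 3 - 2 = m + 1 from rfl,
    Set.mem_insert_iff, Set.mem_singleton_iff] at hr
  rcases hr with rfl | rfl | rfl | rfl | rfl | rfl | rfl | rfl | rfl | rfl | rfl | rfl | rfl | rfl <;>
    simp only [dg, cg, fg, eg, hg, ag, map_mul, map_pow, map_inv, FreeGroup.lift_apply_of,
      modelGen, Matrix.cons_val, mul_inv_rev, affinePair_inv, affinePair_one_one_pow, pow_two,
      ← mul_assoc, affinePair_conj_prodComm, prodComm_mul_self, affinePair_mul, mul_one, one_mul,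
      v_inv, inv_one, v_mul_self, Units.val_one] <;>
    refine affinePair_eq_one ?_ ?_ <;>
    push_cast [coe_v, pow_succ] at h2 ⊢ <;>
    grind

def toModel (m : ℕ) : S (m + 3) →* Equiv.Perm (Z m × Z m) :=
  PresentedGroup.toGroup (lift_modelGen_rels m)

lemma toModel_of (m : ℕ) (i : Fin 6) : toModel m (PresentedGroup.of i) = modelGen m i :=
  PresentedGroup.toGroup.of _

lemma toModel_h (m : ℕ) :
    toModel m (h (m + 3)) = affinePair (v m) (2 ^ (m + 1) - 1) 1 (2 ^ (m + 1) + 1) :=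
  toModel_of m 4

lemma J_le_comap_toModel (m : ℕ) :
    J (m + 3) ≤ (secondCoordAffine (Subgroup.zpowers (v m))).comap (toModel m) := by
  rw [J, Subgroup.closure_le]
  rintro x (rfl | rfl | rfl | rfl) <;>
    simp only [c, e, d, f, SetLike.mem_coe, Subgroup.mem_comap, toModel_of]
  · exact ⟨1, Subgroup.one_mem _, 0, fun p => by simp [modelGen]⟩
  · exact ⟨1, Subgroup.one_mem _, 0, fun p => by simp [modelGen]⟩
  · exact ⟨1, Subgroup.one_mem _, 1, fun p => by simp [modelGen]⟩
  · exact ⟨v m, Subgroup.mem_zpowers _, 0, fun p => by simp [modelGen]⟩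

lemma mul_toModel_h_sq_ne_one (m : ℕ) {σ : Equiv.Perm (Z m × Z m)}
    (hσ : σ ∈ secondCoordAffine (Subgroup.zpowers (v m))) : (σ * toModel m (h (m + 3))) ^ 2 ≠ 1 := by
  obtain ⟨u, hu, s, hσ⟩ := hσ
  intro hsq
  rw [toModel_h] at hsq
  have h0 := congrArg (fun τ : Equiv.Perm (Z m × Z m) => (τ (0, 0)).2) hsq
  simp only [pow_two, Equiv.Perm.mul_apply, hσ, affinePair_apply, Units.val_one, one_mul,
    Equiv.Perm.one_apply, mul_zero, zero_add] at h0
  set y : Z m := u * (2 ^ (m + 1) + 1) + 2 * s with hy_def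
  have hy : (↑u + 1) * y = 0 := by linear_combination h0
  have hodd : Odd ((2 : Z m) ^ (m + 1) + 1) :=
    (even_two.pow_of_ne_zero (by omega : m + 1 ≠ 0)).add_one
  rcases eq_one_or_eq_of_mem_zpowers (v_mul_self m) hu with rfl | rfl
  · have hy_odd : Odd y := by simpa [hy_def] using hodd.add_even (even_two_mul s)
    exact two_pow_mul_ne_zero_of_odd (i := 1) (by omega) hy_odd
      (by rw [Units.val_one] at hy; linear_combination hy)
  · have hv_odd : Odd (v m : Z m) :=
      (even_two.pow_of_ne_zero (by omega : m + 2 ≠ 0)).sub_odd odd_one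
    exact two_pow_mul_ne_zero_of_odd (i := m + 2) (by omega)
      ((hv_odd.mul hodd).add_even (even_two_mul s))
      (by rw [coe_v] at hy; linear_combination hy)

/-- For `k ≥ 3`, the coset `Jh` contains no involutions: `(jh)² ≠ 1` for all
`j ∈ J`. -/
theorem stmt_13 (k : ℕ) (hk : 3 ≤ k) :
    ∀ j ∈ J k, (j * h k) ^ 2 ≠ 1 := by
  obtain ⟨m, rfl⟩ : ∃ m, k = m + 3 := ⟨k - 3, by omega⟩
  intro j hj hsq
  exact mul_toModel_h_sq_ne_one m (J_le_comap_toModel m hj)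
    (by rw [← map_mul, ← map_pow, hsq, map_one])

end Stmt13
end

section
/- Let S = D_{2^k} ≀ C₂ with k ≥ 3 be the wreath product of a dihedral group of order 2^k by C₂. Then S has 2-rank exactly 4, i.e. the largest elementary abelian 2-subgroup of S has order 2⁴. -/
/-- `G` is the wreath product `D_{2^k} ≀ C₂`: generated by two elementwise
commuting dihedral subgroups `A, B ≅ D_{2^k}` intersecting trivially, together
with an involution `t` interchanging them by conjugation. -/
def IsDihedralWreathC2 (G : Type*) [Group G] (k : ℕ) : Prop :=
  ∃ (A B : Subgroup G) (t : G),
    Nonempty (A ≃* DihedralGroup (2 ^ (k - 1))) ∧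
    Nonempty (B ≃* DihedralGroup (2 ^ (k - 1))) ∧
    A ⊓ B = ⊥ ∧ (∀ a ∈ A, ∀ b ∈ B, Commute a b) ∧ t ^ 2 = 1 ∧
    Subgroup.map (MulAut.conj t).toMonoidHom A = B ∧
    Subgroup.closure ((A : Set G) ∪ (B : Set G) ∪ {t}) = ⊤ ∧
    Nat.card G = 2 * Nat.card A * Nat.card B

/-!
Let `N = A ⊔ B`; it is the internal direct product `A × B` and has index `2` by the order
formula. A dihedral group has a cyclic subgroup of index `2`, so its subgroups of exponent `2`
have order at most `4`, and `⟨r m⟩ × ⟨sr 0⟩` is one of order `4` in `DihedralGroup (2 * m)`;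
its copies in `A` and `B` give one of order `16`. Let `E` have exponent `2`. If `E ≤ N`, then
`E` lies in the product of its two projections, of order at most `16`. Otherwise some `g ∈ E`
lies outside `N`, so `g` conjugates `B` into `A`; as `E` is abelian, `E ∩ B = 1`, so `E ∩ N`
projects injectively into `A`, and `|E| ≤ 2 |E ∩ N| ≤ 8`.
-/

open Subgroup

/-- For `n = 2 ^ r`, this says that the `2`-rank of `G` is at most `r`. -/
def ExpTwoCardLE (G : Type*) [Group G] (n : ℕ) : Prop :=
  ∀ E : Subgroup G, (∀ g ∈ E, g ^ 2 = 1) → Nat.card E ≤ n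

def HasExpTwoSubgroupOfCard (G : Type*) [Group G] (n : ℕ) : Prop :=
  ∃ E : Subgroup G, Nat.card E = n ∧ ∀ g ∈ E, g ^ 2 = 1

section General

variable {G H : Type*} [Group G] [Group H] {m n : ℕ}

theorem commute_of_sq_eq_one {x y : G} (hx : x ^ 2 = 1) (hy : y ^ 2 = 1)
    (hxy : (x * y) ^ 2 = 1) : Commute x y := by
  have inv_self {z : G} (hz : z ^ 2 = 1) : z⁻¹ = z :=
    inv_eq_of_mul_eq_one_right (by rwa [← sq])
  calc x * y = (x * y)⁻¹ := (inv_self hxy).symm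
    _ = y * x := by rw [mul_inv_rev, inv_self hx, inv_self hy]

theorem sq_eq_one_of_mem_map {E : Subgroup G} (hE : ∀ g ∈ E, g ^ 2 = 1) (f : G →* H) :
    ∀ x ∈ E.map f, x ^ 2 = 1 := by
  rintro _ ⟨g, hg, rfl⟩
  rw [← map_pow, hE g hg, map_one]

theorem Subgroup.card_le_index_mul_card_inf (E N : Subgroup G) (hN : N.index ≠ 0) :
    Nat.card E ≤ N.index * Nat.card ↥(E ⊓ N) := by
  have hcard : Nat.card ↥(N.subgroupOf E) = Nat.card ↥(E ⊓ N) := by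
    rw [← inf_subgroupOf_right, inf_comm N E,
      Nat.card_congr (subgroupOfEquivOfLe inf_le_left).toEquiv]
  calc Nat.card E = N.relIndex E * Nat.card ↥(N.subgroupOf E) := by
        rw [mul_comm]; exact (card_mul_index _).symm
    _ ≤ N.index * Nat.card ↥(E ⊓ N) := by
        rw [hcard, ← relIndex_top_right]
        gcongr
        exact relIndex_le_of_le_right le_top (by rwa [relIndex_top_right])

theorem ExpTwoCardLE.of_injective {f : G →* H} (hf : Function.Injective f)
    (h : ExpTwoCardLE H n) : ExpTwoCardLE G n := fun E hE => by
  rw [← card_map_of_injective hf]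
  exact h _ (sq_eq_one_of_mem_map hE f)

theorem ExpTwoCardLE.prod [Finite G] [Finite H] (hG : ExpTwoCardLE G m)
    (hH : ExpTwoCardLE H n) : ExpTwoCardLE (G × H) (m * n) := fun E hE =>
  calc Nat.card E
      ≤ Nat.card ↥((E.map (MonoidHom.fst G H)).prod (E.map (MonoidHom.snd G H))) :=
        card_le_of_le fun p hp => ⟨⟨p, hp, rfl⟩, ⟨p, hp, rfl⟩⟩
    _ = Nat.card ↥(E.map (MonoidHom.fst G H)) * Nat.card ↥(E.map (MonoidHom.snd G H)) := by
        rw [Nat.card_congr (prodEquiv _ _).toEquiv, Nat.card_prod]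
    _ ≤ m * n :=
        Nat.mul_le_mul (hG _ (sq_eq_one_of_mem_map hE _)) (hH _ (sq_eq_one_of_mem_map hE _))

theorem ExpTwoCardLE.card_inf_range_le {f : G →* H} (hf : Function.Injective f)
    (h : ExpTwoCardLE G n) {E : Subgroup H} (hE : ∀ g ∈ E, g ^ 2 = 1) :
    Nat.card ↥(E ⊓ f.range) ≤ n := by
  rw [inf_comm, ← map_comap_eq, card_map_of_injective hf]
  refine h _ fun g hg => hf ?_
  rw [map_pow, map_one]
  exact hE _ hg

theorem ExpTwoCardLE.card_le_of_ker_fst (h : ExpTwoCardLE G n) {P : Subgroup (G × H)}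
    (hP : ∀ p ∈ P, p ^ 2 = 1) (hker : ∀ p ∈ P, p.1 = 1 → p = 1) : Nat.card P ≤ n := by
  have hinj : Function.Injective ((MonoidHom.fst G H).comp P.subtype) :=
    (injective_iff_map_eq_one _).mpr fun p hp => Subtype.ext (hker p p.2 hp)
  rw [← card_top (G := P)]
  exact h.of_injective hinj ⊤ fun p _ => Subtype.ext (hP p p.2)

theorem ExpTwoCardLE.of_index {N : Subgroup G} (hN : N.index ≠ 0) (h : ExpTwoCardLE N n) :
    ExpTwoCardLE G (N.index * n) := fun E hE =>
  (E.card_le_index_mul_card_inf N hN).trans <| Nat.mul_le_mul_left _ <| by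
    simpa only [range_subtype] using h.card_inf_range_le N.subtype_injective hE

theorem expTwoCardLE_two_of_isCyclic [IsCyclic G] : ExpTwoCardLE G 2 := fun E hE => by
  rw [← IsCyclic.exponent_eq_card]
  exact Nat.le_of_dvd two_pos
    (Monoid.exponent_dvd_of_forall_pow_eq_one fun g => Subtype.ext (hE g g.2))

theorem HasExpTwoSubgroupOfCard.map_injective {f : G →* H} (hf : Function.Injective f)
    (h : HasExpTwoSubgroupOfCard G n) : HasExpTwoSubgroupOfCard H n := by
  obtain ⟨E, hcard, hE⟩ := h
  exact ⟨E.map f, by rw [card_map_of_injective hf, hcard], sq_eq_one_of_mem_map hE f⟩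

theorem HasExpTwoSubgroupOfCard.prod (hG : HasExpTwoSubgroupOfCard G m)
    (hH : HasExpTwoSubgroupOfCard H n) : HasExpTwoSubgroupOfCard (G × H) (m * n) := by
  obtain ⟨E, hE, hE2⟩ := hG
  obtain ⟨F, hF, hF2⟩ := hH
  refine ⟨E.prod F, by rw [Nat.card_congr (prodEquiv E F).toEquiv, Nat.card_prod, hE, hF], ?_⟩
  rintro ⟨g, h⟩ ⟨hg, hh⟩
  exact Prod.ext (hE2 g hg) (hF2 h hh)

theorem hasExpTwoSubgroupOfCard_zpowers {a : G} (ha : orderOf a = 2) :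
    HasExpTwoSubgroupOfCard (zpowers a) 2 := by
  refine ⟨⊤, by rw [card_top, Nat.card_zpowers, ha], fun x _ => Subtype.ext ?_⟩
  obtain ⟨k, hk⟩ := mem_zpowers_iff.mp x.2
  rw [coe_pow, ← hk, ← zpow_natCast, ← zpow_mul, mul_comm, zpow_mul, zpow_natCast, ← ha,
    pow_orderOf_eq_one, one_zpow, coe_one]

theorem Subgroup.noncommCoprod_subtype_injective {H K : Subgroup G}
    (hcomm : ∀ (h : H) (k : K), Commute (H.subtype h) (K.subtype k)) (hHK : Disjoint H K) :
    Function.Injective (H.subtype.noncommCoprod K.subtype hcomm) :=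
  (MonoidHom.noncommCoprod_injective _ _ _).mpr
    ⟨H.subtype_injective, K.subtype_injective, by rwa [range_subtype, range_subtype]⟩

theorem Subgroup.noncommCoprod_subtype_range {H K : Subgroup G}
    (hcomm : ∀ (h : H) (k : K), Commute (H.subtype h) (K.subtype k)) :
    (H.subtype.noncommCoprod K.subtype hcomm).range = H ⊔ K := by
  rw [MonoidHom.noncommCoprod_range, range_subtype, range_subtype]

theorem HasExpTwoSubgroupOfCard.of_commute_of_disjoint {H K : Subgroup G}
    (hcomm : ∀ (h : H) (k : K), Commute (H.subtype h) (K.subtype k)) (hHK : Disjoint H K)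
    (hH : HasExpTwoSubgroupOfCard H m) (hK : HasExpTwoSubgroupOfCard K n) :
    HasExpTwoSubgroupOfCard G (m * n) :=
  (hH.prod hK).map_injective (noncommCoprod_subtype_injective hcomm hHK)

end General

namespace DihedralGroup

theorem expTwoCardLE_four {n : ℕ} (hn : n ≠ 0) : ExpTwoCardLE (DihedralGroup n) 4 := by
  have hindex : (zpowers (r 1 : DihedralGroup n)).index = 2 := by
    have h := card_mul_index (zpowers (r 1 : DihedralGroup n))
    rw [Nat.card_zpowers, orderOf_r_one, nat_card, mul_comm 2] at h
    exact Nat.eq_of_mul_eq_mul_left (Nat.pos_of_ne_zero hn) h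
  simpa [hindex] using
    (expTwoCardLE_two_of_isCyclic (G := zpowers (r 1 : DihedralGroup n))).of_index (by omega)

theorem hasExpTwoSubgroupOfCard_four {m : ℕ} (hm : m ≠ 0) :
    HasExpTwoSubgroupOfCard (DihedralGroup (2 * m)) 4 := by
  have : NeZero (2 * m) := ⟨by omega⟩
  set c : ZMod (2 * m) := (m : ZMod (2 * m))
  have hcc : c + c = 0 := by
    simpa [two_mul] using ZMod.natCast_self (2 * m)
  have hc0 : c ≠ 0 := by
    rw [Ne, ZMod.natCast_eq_zero_iff]
    intro h
    have := Nat.le_of_dvd (Nat.pos_of_ne_zero hm) h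
    omega
  have hrc : orderOf (r c) = 2 :=
    orderOf_eq_prime (by rw [sq, r_mul_r, hcc, r_zero]) (by rwa [← r_zero, Ne, r.injEq])
  have hcomm : Commute (r c) (sr 0) := by
    rw [Commute, SemiconjBy, r_mul_sr, sr_mul_r]
    congr 1
    linear_combination -hcc
  have hdisj : Disjoint (zpowers (r c)) (zpowers (sr 0)) := by
    have hsr : sr (0 : ZMod (2 * m)) ^ (2 : ℤ) = 1 := by rw [zpow_two, sr_mul_self]
    rw [disjoint_def]
    rintro _ ⟨i, rfl⟩ ⟨j, hj⟩
    dsimp only at hj ⊢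
    obtain ⟨l, rfl | rfl⟩ := Int.even_or_odd' j
    · rw [← hj, zpow_mul, hsr, one_zpow]
    · simp [zpow_add_one, zpow_mul, hsr, r_zpow] at hj
  simpa using HasExpTwoSubgroupOfCard.of_commute_of_disjoint
    (fun x y => by
      obtain ⟨i, hi⟩ := mem_zpowers_iff.mp x.2
      obtain ⟨j, hj⟩ := mem_zpowers_iff.mp y.2
      simpa only [coe_subtype, ← hi, ← hj] using hcomm.zpow_zpow i j)
    hdisj (hasExpTwoSubgroupOfCard_zpowers hrc) (hasExpTwoSubgroupOfCard_zpowers (orderOf_sr 0))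

end DihedralGroup

namespace Subgroup

variable {S : Type*} [Group S] {A B : Subgroup S}
  (hcomm : ∀ (a : A) (b : B), Commute (A.subtype a) (B.subtype b))
include hcomm

theorem card_inf_sup_le_mul [Finite A] [Finite B] (hAB : Disjoint A B) {m n : ℕ}
    (hA : ExpTwoCardLE A m) (hB : ExpTwoCardLE B n) {E : Subgroup S} (hE : ∀ g ∈ E, g ^ 2 = 1) :
    Nat.card ↥(E ⊓ (A ⊔ B)) ≤ m * n := by
  simpa only [noncommCoprod_subtype_range] using
    (hA.prod hB).card_inf_range_le (noncommCoprod_subtype_injective hcomm hAB) hE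

theorem card_inf_sup_le_of_conj_mem (hAB : Disjoint A B) {m : ℕ} (hA : ExpTwoCardLE A m)
    {E : Subgroup S} (hE : ∀ g ∈ E, g ^ 2 = 1) {g : S} (hgE : g ∈ E)
    (hg : ∀ b ∈ B, g * b * g⁻¹ ∈ A) : Nat.card ↥(E ⊓ (A ⊔ B)) ≤ m := by
  have hφ := noncommCoprod_subtype_injective hcomm hAB
  rw [← noncommCoprod_subtype_range hcomm, inf_comm, ← map_comap_eq, card_map_of_injective hφ]
  refine hA.card_le_of_ker_fst (fun p hp => hφ ?_) ?_
  · rw [map_pow, map_one]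
    exact hE _ hp
  rintro ⟨a, b⟩ hp (rfl : a = 1)
  have hbE : (b : S) ∈ E := by simpa using hp
  have hgb : g * b * g⁻¹ = b := by
    rw [(commute_of_sq_eq_one (hE g hgE) (hE b hbE) (hE _ (mul_mem hgE hbE))).eq,
      mul_inv_cancel_right]
  have hb : (b : S) = 1 := disjoint_def.mp hAB (hgb ▸ hg b b.2) b.2
  exact Prod.ext rfl (Subtype.ext hb)

theorem index_sup_eq_two_of_card_eq [Finite A] [Finite B] (hAB : Disjoint A B)
    (hcard : Nat.card S = 2 * Nat.card A * Nat.card B) : (A ⊔ B).index = 2 := by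
  have hsup : Nat.card ↥(A ⊔ B) = Nat.card A * Nat.card B := by
    rw [← noncommCoprod_subtype_range hcomm, MonoidHom.range_eq_map,
      card_map_of_injective (noncommCoprod_subtype_injective hcomm hAB), card_top, Nat.card_prod]
  have h := card_mul_index (A ⊔ B)
  rw [hsup, hcard] at h
  exact Nat.eq_of_mul_eq_mul_left (n := Nat.card A * Nat.card B)
    (Nat.mul_pos Nat.card_pos Nat.card_pos) (by rw [h]; ring)

theorem sup_le_normalizer_left : A ⊔ B ≤ normalizer (A : Set S) :=
  sup_le le_normalizer fun b hb => centralizer_le_normalizer _ <| mem_centralizer_iff.mpr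
    fun a ha => (hcomm ⟨a, ha⟩ ⟨b, hb⟩).eq

theorem notMem_sup_of_map_conj (hAB : Disjoint A B) (hA : A ≠ ⊥) {t : S}
    (ht : A.map (MulAut.conj t).toMonoidHom = B) : t ∉ A ⊔ B := by
  intro htN
  obtain ⟨⟨a, ha⟩, ha1⟩ := (ne_bot_iff_exists_ne_one).mp hA
  have htaA : t * a * t⁻¹ ∈ A :=
    (mem_normalizer_iff.mp (sup_le_normalizer_left hcomm htN) a).mp ha
  have htaB : t * a * t⁻¹ ∈ B := ht ▸ ⟨a, ha, rfl⟩
  exact ha1 (Subtype.ext (conj_eq_one_iff.mp (disjoint_def.mp hAB htaA htaB)))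

theorem conj_mem_of_notMem_sup (hidx : (A ⊔ B).index = 2) {t : S}
    (ht : A.map (MulAut.conj t).toMonoidHom = B) (htN : t ∉ A ⊔ B) {g : S} (hg : g ∉ A ⊔ B)
    {b : S} (hb : b ∈ B) : g * b * g⁻¹ ∈ A := by
  have hgt : g * t ∈ A ⊔ B := (mul_mem_iff_of_index_two hidx).mpr (iff_of_false hg htN)
  rw [← ht] at hb
  obtain ⟨a, ha, rfl⟩ := hb
  have hconj : g * (MulAut.conj t).toMonoidHom a * g⁻¹ = g * t * a * (g * t)⁻¹ := by
    simp [mul_assoc]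
  rw [hconj]
  exact (mem_normalizer_iff.mp (sup_le_normalizer_left hcomm hgt) a).mp ha

end Subgroup

/-- Let `S = D_{2^k} ≀ C₂` with `k ≥ 3`.  Then `S` has `2`-rank exactly `4`:
it contains an elementary abelian subgroup of order `2⁴`, and every elementary
abelian `2`-subgroup has order at most `2⁴`. -/
theorem stmt_15 (k : ℕ) (hk : 3 ≤ k) (S : Type*) [Group S] [Finite S]
    (hS : IsDihedralWreathC2 S k) :
    (∃ E : Subgroup S, Nat.card E = 2 ^ 4 ∧ ∀ g ∈ E, g ^ 2 = 1) ∧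
    ∀ E : Subgroup S, (∀ g ∈ E, g ^ 2 = 1) → Nat.card E ≤ 2 ^ 4 := by
  obtain ⟨A, B, t, ⟨eA⟩, ⟨eB⟩, hAB, hcomm, -, ht, -, hcard⟩ := hS
  obtain ⟨m, hm0, hm⟩ : ∃ m, m ≠ 0 ∧ 2 ^ (k - 1) = 2 * m :=
    ⟨2 ^ (k - 2), by positivity, by rw [← pow_succ']; congr 1; omega⟩
  rw [hm] at eA eB
  have hcomm' : ∀ (a : A) (b : B), Commute (A.subtype a) (B.subtype b) :=
    fun a b => hcomm a a.2 b b.2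
  have hdisj : Disjoint A B := disjoint_iff.mpr hAB
  have hD := DihedralGroup.expTwoCardLE_four (n := 2 * m) (by omega)
  have hA : ExpTwoCardLE A 4 := hD.of_injective (f := eA.toMonoidHom) eA.injective
  have hB : ExpTwoCardLE B 4 := hD.of_injective (f := eB.toMonoidHom) eB.injective
  have hN : (A ⊔ B).index = 2 := index_sup_eq_two_of_card_eq hcomm' hdisj hcard
  have htN : t ∉ A ⊔ B := notMem_sup_of_map_conj hcomm' hdisj
    ((nontrivial_iff_ne_bot A).mp eA.toEquiv.nontrivial) ht
  refine ⟨?_, fun E hE => ?_⟩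
  · have hK := DihedralGroup.hasExpTwoSubgroupOfCard_four hm0
    exact HasExpTwoSubgroupOfCard.of_commute_of_disjoint (m := 4) (n := 4) hcomm' hdisj
      (hK.map_injective (f := eA.symm.toMonoidHom) eA.symm.injective)
      (hK.map_injective (f := eB.symm.toMonoidHom) eB.symm.injective)
  by_cases hEN : E ≤ A ⊔ B
  · simpa [inf_of_le_left hEN] using card_inf_sup_le_mul hcomm' hdisj hA hB hE
  obtain ⟨g, hgE, hgN⟩ := SetLike.not_le_iff_exists.mp hEN
  calc Nat.card E ≤ (A ⊔ B).index * Nat.card ↥(E ⊓ (A ⊔ B)) :=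
        E.card_le_index_mul_card_inf _ (by omega)
    _ ≤ 2 * 4 := by
        rw [hN]
        gcongr
        exact card_inf_sup_le_of_conj_mem hcomm' hdisj hA hE hgE
          fun b hb => conj_mem_of_notMem_sup hcomm' hN ht htN hgN hb
    _ ≤ 2 ^ 4 := by norm_num
end

section
/- Let G be a finite group, N ⊴ G a normal subgroup, p a prime, and X = C_S(N/O_{p'}(N)) for S ∈ Syl_p(G), i.e. X is the set of elements of S acting trivially on N/O_{p'}(N). Then [T, X] = 1 where T = S ∩ N, and for any subgroup H ≤ N normalized by X one has [H, X] ≤ O_{p'}(H). -/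
/-- The `p'`-core `O_{p'}(G)`: the largest normal subgroup of the finite group `G`
of order prime to `p` (formulated as the join of all normal subgroups of order
coprime to `p`). -/
def pPrimeCore (p : ℕ) (G : Type*) [Group G] : Subgroup G :=
  ⨆ (H : Subgroup G) (_ : H.Normal) (_ : (Nat.card H).Coprime p), H

open scoped commutatorElement

/-!
For `t ∈ S ∩ N` and `s ∈ X`, the commutator `⁅t, s⁆` lies both in the `p`-group `S` and in
`O_{p'}(N)`, so it is trivial. For `H ≤ N` normalized by `s` and `h ∈ H`, `⁅h, s⁆` lies in
`H ∩ O_{p'}(N)`, a normal `p'`-subgroup of `H`, hence in `O_{p'}(H)`. Both steps rest on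
`O_{p'}` of a finite group being itself a normal `p'`-subgroup, which holds because
`|AB|` divides `|A| |B|` when `B` is normal.
-/

namespace Subgroup

variable {G : Type*} [Group G]

theorem commutatorElement_mem_of_mem_normalizer {H : Subgroup G} {h g : G} (hh : h ∈ H)
    (hg : g ∈ normalizer (H : Set G)) : ⁅h, g⁆ ∈ H := by
  rw [commutatorElement_def, mul_assoc, mul_assoc, ← mul_assoc g]
  exact mul_mem hh ((mem_normalizer_iff.mp hg _).mp (inv_mem hh))

theorem card_sup_dvd_card_mul_card (H K : Subgroup G) [K.Normal] :
    Nat.card ↥(H ⊔ K) ∣ Nat.card H * Nat.card K := by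
  rw [← relIndex_bot_left (H ⊔ K), ← relIndex_mul_relIndex ⊥ K (H ⊔ K) bot_le le_sup_right,
    relIndex_bot_left, relIndex_sup_right, mul_comm]
  exact mul_dvd_mul_right (relIndex_dvd_card _ _) _

theorem le_normalizer_map_subtype {N : Subgroup G} (K : Subgroup N) [K.Normal] :
    N ≤ normalizer ((K.map N.subtype : Subgroup G) : Set G) := by
  calc N = (normalizer (K : Set N)).map N.subtype := by
        rw [normalizer_eq_top, ← MonoidHom.range_eq_map, range_subtype]
    _ ≤ _ := le_normalizer_map _

end Subgroup

theorem IsPGroup.disjoint_of_coprime_card {p : ℕ} {G : Type*} [Group G] {P K : Subgroup G}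
    (hP : IsPGroup p P) (hK : (Nat.card K).Coprime p) : Disjoint P K := by
  refine Subgroup.disjoint_def.mpr fun {x} hxP hxK => ?_
  obtain ⟨k, hk⟩ := hP ⟨x, hxP⟩
  have hxk : x ^ p ^ k = 1 := congrArg Subtype.val hk
  exact orderOf_eq_one_iff.mp <| Nat.eq_one_of_dvd_coprimes (hK.pow_right k)
    (Subgroup.orderOf_dvd_natCard K hxK) (orderOf_dvd_of_pow_eq_one hxk)

section pPrimeCore

variable (p : ℕ) (G : Type*) [Group G]

theorem le_pPrimeCore {K : Subgroup G} [hK : K.Normal] (hKp : (Nat.card K).Coprime p) :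
    K ≤ pPrimeCore p G :=
  le_iSup_of_le K <| le_iSup_of_le hK <| le_iSup_of_le hKp le_rfl

theorem supClosed_normal_coprime_card [Finite G] :
    SupClosed {H : Subgroup G | H.Normal ∧ (Nat.card H).Coprime p} := by
  rintro H ⟨hH, hHp⟩ K ⟨hK, hKp⟩
  exact ⟨Subgroup.sup_normal H K,
    (Nat.Coprime.mul_left hHp hKp).coprime_dvd_left (Subgroup.card_sup_dvd_card_mul_card H K)⟩

theorem pPrimeCore_normal_and_coprime [Finite G] :
    (pPrimeCore p G).Normal ∧ (Nat.card (pPrimeCore p G)).Coprime p := by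
  have : Finite (Subgroup G) := Finite.of_injective _ SetLike.coe_injective
  have hs := supClosed_normal_coprime_card p G
  have hbot : (⊥ : Subgroup G).Normal ∧ (Nat.card (⊥ : Subgroup G)).Coprime p :=
    ⟨inferInstance, by simp⟩
  exact hs.iSup_mem hbot fun H => hs.iSup_mem hbot fun hH => hs.iSup_mem hbot fun hHp => ⟨hH, hHp⟩

instance pPrimeCore_normal [Finite G] : (pPrimeCore p G).Normal :=
  (pPrimeCore_normal_and_coprime p G).1

theorem coprime_card_pPrimeCore [Finite G] : (Nat.card (pPrimeCore p G)).Coprime p :=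
  (pPrimeCore_normal_and_coprime p G).2

variable {G}

theorem map_subtype_pPrimeCore_subgroupOf_le {N H : Subgroup G} [Finite N] (hHN : H ≤ N) :
    ((pPrimeCore p N).map N.subtype).subgroupOf H ≤ pPrimeCore p H := by
  have : (((pPrimeCore p N).map N.subtype).subgroupOf H).Normal :=
    Subgroup.normal_subgroupOf_of_le_normalizer (hHN.trans (Subgroup.le_normalizer_map_subtype _))
  refine le_pPrimeCore p H ((coprime_card_pPrimeCore p N).coprime_dvd_left ?_)
  rw [← Subgroup.card_map_of_injective H.subtype_injective, Subgroup.subgroupOf_map_subtype,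
    ← Subgroup.card_map_of_injective N.subtype_injective (K := pPrimeCore p N)]
  exact Subgroup.card_dvd_of_le inf_le_left

end pPrimeCore

theorem stmt_17_general (p : ℕ) (G : Type*) [Group G] [Finite G]
    (N : Subgroup G) (S : Sylow p G) (X : Set G)
    (hX : X = {s | s ∈ (S : Subgroup G) ∧
      ∀ n ∈ N, ⁅n, s⁆ ∈ Subgroup.map N.subtype (pPrimeCore p N)}) :
    (∀ t ∈ (S : Subgroup G) ⊓ N, ∀ s ∈ X, Commute t s) ∧
    (∀ H : Subgroup G, H ≤ N →
      (∀ s ∈ X, Subgroup.map (MulAut.conj s).toMonoidHom H = H) →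
      ∀ h ∈ H, ∀ s ∈ X, ⁅h, s⁆ ∈ Subgroup.map H.subtype (pPrimeCore p H)) := by
  subst hX
  have hcop : (Nat.card ((pPrimeCore p N).map N.subtype)).Coprime p := by
    rw [Subgroup.card_map_of_injective N.subtype_injective]
    exact coprime_card_pPrimeCore p N
  refine ⟨?_, ?_⟩
  · rintro t ⟨htS, htN⟩ s ⟨hsS, hsN⟩
    have htsS : ⁅t, s⁆ ∈ (S : Subgroup G) :=
      mul_mem (mul_mem (mul_mem htS hsS) (inv_mem htS)) (inv_mem hsS)
    rw [← commutatorElement_eq_one_iff_commute]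
    exact Subgroup.disjoint_def.mp (S.2.disjoint_of_coprime_card hcop) htsS (hsN t htN)
  · intro H hHN hHX h hh s hs
    have hhsH : ⁅h, s⁆ ∈ H := Subgroup.commutatorElement_mem_of_mem_normalizer hh
      (Subgroup.mem_normalizer_iff_map_conj_eq.mpr (hHX s hs))
    exact ⟨⟨⁅h, s⁆, hhsH⟩, map_subtype_pPrimeCore_subgroupOf_le p hHN (hs.2 h (hHN hh)), rfl⟩

/-- Let `G` be a finite group, `N ⊴ G`, `p` a prime, `S ∈ Syl_p(G)`, and
`X = C_S(N/O_{p'}(N))` the set of elements of `S` acting trivially on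
`N/O_{p'}(N)`.  Then `[T, X] = 1` where `T = S ∩ N`, and for any subgroup
`H ≤ N` normalized by `X` one has `[H, X] ≤ O_{p'}(H)`. -/
theorem stmt_17 (p : ℕ) (hp : p.Prime) (G : Type*) [Group G] [Finite G]
    (N : Subgroup G) (hN : N.Normal) (S : Sylow p G) (X : Set G)
    (hX : X = {s | s ∈ (S : Subgroup G) ∧
      ∀ n ∈ N, ⁅n, s⁆ ∈ Subgroup.map N.subtype (pPrimeCore p N)}) :
    (∀ t ∈ (S : Subgroup G) ⊓ N, ∀ s ∈ X, Commute t s) ∧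
    (∀ H : Subgroup G, H ≤ N →
      (∀ s ∈ X, Subgroup.map (MulAut.conj s).toMonoidHom H = H) →
      ∀ h ∈ H, ∀ s ∈ X, ⁅h, s⁆ ∈ Subgroup.map H.subtype (pPrimeCore p H)) :=
  stmt_17_general p G N S X hX
end
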